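/- arXiv:2005.08941 — 5 statements merged into one kernel-verified Lean document; each statement's English description precedes it below -/
import Mathlib

section
/- Let Ω ⊂ ℝ² be a compact convex set with 0 in its interior and Ω° its polar set. For any angles θ, ψ ∈ ℝ, the generalized trigonometric functions satisfy cos_Ω θ · cos_{Ω°} ψ + sin_Ω θ · sin_{Ω°} ψ ≤ 1. -/
open MeasureTheory Real Set

/-- Counterclockwise polar angle of a point of the plane, in `[0, 2π)`. -/
noncomputable def polarAngle (v : ℝ × ℝ) : ℝ :=
  if 0 ≤ Complex.arg ((v.1 : ℂ) + (v.2 : ℂ) * Complex.I) then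
    Complex.arg ((v.1 : ℂ) + (v.2 : ℂ) * Complex.I)
  else Complex.arg ((v.1 : ℂ) + (v.2 : ℂ) * Complex.I) + 2 * Real.pi

/-- Area of the sector of `Ω` between the positive `x`-axis and the polar angle `β`. -/
noncomputable def sectorArea (Ω : Set (ℝ × ℝ)) (β : ℝ) : ℝ :=
  (volume {v | v ∈ Ω ∧ polarAngle v ≤ β}).toReal

/-- Area of a planar set. -/
noncomputable def area2 (Ω : Set (ℝ × ℝ)) : ℝ := (volume Ω).toReal

/-- `P : ℝ → ℝ × ℝ`, `P θ = (cos_Ω θ, sin_Ω θ)`, is the sector-area parametrization of `∂Ω`: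
for `θ ∈ [0, 2𝕊)` (where `𝕊 = area Ω`), `P θ ∈ ∂Ω` and the sector of `Ω` between the
positive `x`-axis and the ray `O P θ` has area `θ/2`; `P` is `2𝕊`-periodic. -/
def IsCT (Ω : Set (ℝ × ℝ)) (P : ℝ → ℝ × ℝ) : Prop :=
  (∀ θ : ℝ, P (θ + 2 * area2 Ω) = P θ) ∧
  ∀ θ ∈ Set.Ico (0 : ℝ) (2 * area2 Ω),
    P θ ∈ frontier Ω ∧ sectorArea Ω (polarAngle (P θ)) = θ / 2

/-- The polar set `Ω° = {q : ⟨q, v⟩ ≤ 1 ∀ v ∈ Ω}`. -/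
def polarSet (Ω : Set (ℝ × ℝ)) : Set (ℝ × ℝ) :=
  {q | ∀ v ∈ Ω, q.1 * v.1 + q.2 * v.2 ≤ 1}

/-- The covector `q` determines a supporting half-plane of `Ω` at `x`. -/
def Supports (Ω : Set (ℝ × ℝ)) (x q : ℝ × ℝ) : Prop :=
  q.1 * x.1 + q.2 * x.2 = 1 ∧ ∀ v ∈ Ω, q.1 * v.1 + q.2 * v.2 ≤ 1

/-! `P θ` lies on `∂Ω ⊆ Ω` and `Q ψ` on `∂Ω° ⊆ Ω°`, after reducing `θ, ψ` modulo the periods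
`2 area Ω` and `2 area Ω°`; the inequality is then the definition of `Ω°`. The reduction needs both
areas to be positive: `Ω` has interior, and since `Ω` is bounded and a neighbourhood of `0`, so
is `Ω°`. -/

open Topology

lemma IsCT.mem {Ω : Set (ℝ × ℝ)} {P : ℝ → ℝ × ℝ} (hP : IsCT Ω P) (hcl : IsClosed Ω)
    (hpos : 0 < area2 Ω) (θ : ℝ) : P θ ∈ Ω := by
  obtain ⟨y, hy, hθy⟩ := Function.Periodic.exists_mem_Ico₀ hP.1 (by positivity) θ
  exact hθy ▸ hcl.frontier_subset (hP.2 y hy).1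

lemma area2_pos {Ω : Set (ℝ × ℝ)} (hΩ : Bornology.IsBounded Ω) (hint : (interior Ω).Nonempty) :
    0 < area2 Ω :=
  ENNReal.toReal_pos (Measure.measure_pos_of_nonempty_interior _ hint).ne'
    hΩ.measure_lt_top.ne

lemma isClosed_polarSet (Ω : Set (ℝ × ℝ)) : IsClosed (polarSet Ω) := by
  have : polarSet Ω = ⋂ v ∈ Ω, {q : ℝ × ℝ | q.1 * v.1 + q.2 * v.2 ≤ 1} := by
    ext q; simp [polarSet]
  rw [this]
  exact isClosed_biInter fun v _ => isClosed_le (by fun_prop) continuous_const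

lemma dot_le_two_mul_norm_mul_norm (q v : ℝ × ℝ) : q.1 * v.1 + q.2 * v.2 ≤ 2 * (‖q‖ * ‖v‖) := by
  have h₁ : |q.1| * |v.1| ≤ ‖q‖ * ‖v‖ :=
    mul_le_mul (norm_fst_le q) (norm_fst_le v) (abs_nonneg _) (norm_nonneg _)
  have h₂ : |q.2| * |v.2| ≤ ‖q‖ * ‖v‖ :=
    mul_le_mul (norm_snd_le q) (norm_snd_le v) (abs_nonneg _) (norm_nonneg _)
  nlinarith [le_abs_self (q.1 * v.1), le_abs_self (q.2 * v.2), abs_mul q.1 v.1, abs_mul q.2 v.2]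

lemma polarSet_mem_nhds_zero {Ω : Set (ℝ × ℝ)} (hΩ : Bornology.IsBounded Ω) :
    polarSet Ω ∈ 𝓝 0 := by
  obtain ⟨C, hC₀, hC⟩ := hΩ.exists_pos_norm_le
  refine Metric.mem_nhds_iff.2 ⟨1 / (2 * C), by positivity, fun q hq v hv => ?_⟩
  have hq : ‖q‖ * (2 * C) < 1 := by
    rw [← lt_div_iff₀ (by positivity)]; simpa using hq
  nlinarith [dot_le_two_mul_norm_mul_norm q v, hC v hv, norm_nonneg q]

lemma abs_coe_signType_le_one (s : SignType) : |(s : ℝ)| ≤ 1 := by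
  cases s <;> simp

lemma isBounded_polarSet {Ω : Set (ℝ × ℝ)} (hΩ : Ω ∈ 𝓝 0) : Bornology.IsBounded (polarSet Ω) := by
  obtain ⟨ε, hε, hball⟩ := Metric.mem_nhds_iff.1 hΩ
  refine isBounded_iff_forall_norm_le.2 ⟨2 / ε, fun q hq => ?_⟩
  -- Test `q` against the point `(ε/2) (sign q₁, sign q₂)` of `Ω`, which gives `(ε/2)(|q₁| + |q₂|) ≤ 1`.
  set v : ℝ × ℝ := ((ε / 2) * SignType.sign q.1, (ε / 2) * SignType.sign q.2)
  have hv : v ∈ Ω := by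
    refine hball (mem_ball_zero_iff.2 ((norm_prod_le_iff.2 ⟨?_, ?_⟩).trans_lt (half_lt_self hε))) <;>
      simp only [v, norm_mul, Real.norm_eq_abs, abs_of_pos (half_pos hε)] <;>
      exact mul_le_of_le_one_right (half_pos hε).le (abs_coe_signType_le_one _)
  have hsum : ε / 2 * (|q.1| + |q.2|) ≤ 1 := by
    have := hq v hv
    simp only [v, mul_left_comm _ (ε / 2), self_mul_sign] at this
    linarith
  rw [Prod.norm_def, Real.norm_eq_abs, Real.norm_eq_abs, le_div_iff₀ hε]
  rcases max_cases |q.1| |q.2| with ⟨h, -⟩ | ⟨h, -⟩ <;> rw [h] <;>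
    nlinarith [abs_nonneg q.1, abs_nonneg q.2]

theorem stmt1_general (Ω : Set (ℝ × ℝ)) (hcomp : IsCompact Ω)
    (h0 : (0 : ℝ × ℝ) ∈ interior Ω)
    (P Q : ℝ → ℝ × ℝ) (hP : IsCT Ω P) (hQ : IsCT (polarSet Ω) Q)
    (θ ψ : ℝ) :
    (P θ).1 * (Q ψ).1 + (P θ).2 * (Q ψ).2 ≤ 1 := by
  have hΩ : Ω ∈ 𝓝 0 := mem_interior_iff_mem_nhds.1 h0
  have hPθ : P θ ∈ Ω := hP.mem hcomp.isClosed (area2_pos hcomp.isBounded ⟨0, h0⟩) θ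
  have hpolar : 0 < area2 (polarSet Ω) :=
    area2_pos (isBounded_polarSet hΩ)
      ⟨0, mem_interior_iff_mem_nhds.2 (polarSet_mem_nhds_zero hcomp.isBounded)⟩
  have hQψ : Q ψ ∈ polarSet Ω := hQ.mem (isClosed_polarSet Ω) hpolar ψ
  linarith [hQψ (P θ) hPθ, mul_comm (P θ).1 (Q ψ).1, mul_comm (P θ).2 (Q ψ).2]

/-- For any angles `θ, ψ`, `cos_Ω θ · cos_{Ω°} ψ + sin_Ω θ · sin_{Ω°} ψ ≤ 1`. -/
theorem stmt1 (Ω : Set (ℝ × ℝ)) (hcomp : IsCompact Ω) (hconv : Convex ℝ Ω)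
    (h0 : (0 : ℝ × ℝ) ∈ interior Ω)
    (P Q : ℝ → ℝ × ℝ) (hP : IsCT Ω P) (hQ : IsCT (polarSet Ω) Q)
    (θ ψ : ℝ) :
    (P θ).1 * (Q ψ).1 + (P θ).2 * (Q ψ).2 ≤ 1 :=
  stmt1_general Ω hcomp h0 P Q hP hQ θ ψ
end

section
/- The Jacobian determinant of the generalized polar change of coordinates x = r cos_Ω θ, y = r sin_Ω θ equals r (at every point where θ ↦ (cos_Ω θ, sin_Ω θ) is differentiable). -/
open MeasureTheory Real Set

/-!
Reduce by periodicity to `θ₀ ∈ [0, 2|Ω|)` and put `a = P θ₀`, `b = P t` with `t > θ₀`. The part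
of `Ω` with polar angle between those of `a` and `b` has area `(t - θ₀)/2`. Up to a null segment
it contains the triangle `0ab`, of area `cross a b / 2`, and it is contained in the triangle
`0ap`, where `p` is `b` pushed onto the supporting line `{q·v = 1}` of `Ω` at `a`. Hence
`cross a b ≤ t - θ₀ ≤ cross a b / (q·b)`, and as `t → θ₀⁺`, `q·b → q·a = 1`, so the
derivative `a.1 s' - a.2 c'` of `t ↦ cross a (P t)` at `θ₀` equals `1`; the determinant is `r`
times it.
-/

open Filter Topology

lemma Function.Periodic.hasDerivAt_toIcoMod {E : Type*} [NormedAddCommGroup E] [NormedSpace ℝ E]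
    {f : ℝ → E} {T : ℝ} (hf : Function.Periodic f T) (hT : 0 < T) {f' : E} {x : ℝ}
    (h : HasDerivAt f f' x) : HasDerivAt f f' (toIcoMod hT 0 x) := by
  rw [← toIcoMod_add_toIcoDiv_zsmul hT 0 x] at h
  have hshift : (fun y => f (y + toIcoDiv hT 0 x • T)) = f := funext (hf.zsmul _)
  exact hshift ▸ h.comp_add_const _ _

namespace GeneralizedPolar

def cross (u v : ℝ × ℝ) : ℝ := u.1 * v.2 - u.2 * v.1

lemma cross_self (u : ℝ × ℝ) : cross u u = 0 := by
  rw [cross]; ring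

lemma cross_smul_right (u v : ℝ × ℝ) (c : ℝ) : cross u (c • v) = c * cross u v := by
  simp only [cross, Prod.smul_fst, Prod.smul_snd, smul_eq_mul]; ring

lemma cross_smul_left (u v : ℝ × ℝ) (c : ℝ) : cross (c • u) v = c * cross u v := by
  simp only [cross, Prod.smul_fst, Prod.smul_snd, smul_eq_mul]; ring

lemma cross_add_smul (u v : ℝ × ℝ) (s t : ℝ) :
    cross u (s • u + t • v) = t * cross u v := by
  simp only [cross, Prod.smul_fst, Prod.smul_snd, Prod.fst_add, Prod.snd_add, smul_eq_mul]; ring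

lemma cross_smul_add (u v : ℝ × ℝ) (s t : ℝ) :
    cross (s • u + t • v) v = s * cross u v := by
  simp only [cross, Prod.smul_fst, Prod.smul_snd, Prod.fst_add, Prod.snd_add, smul_eq_mul]; ring

/-- Cramer's rule in the plane. -/
lemma cross_smul_eq (u v w : ℝ × ℝ) : cross u v • w = cross w v • u + cross u w • v := by
  ext <;> simp only [cross, Prod.smul_fst, Prod.smul_snd, Prod.fst_add, Prod.snd_add, smul_eq_mul]
    <;> ring

lemma polarAngle_mem_Ico (v : ℝ × ℝ) : polarAngle v ∈ Ico 0 (2 * π) := by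
  have h₁ := Complex.neg_pi_lt_arg ((v.1 : ℂ) + (v.2 : ℂ) * Complex.I)
  have h₂ := Complex.arg_le_pi ((v.1 : ℂ) + (v.2 : ℂ) * Complex.I)
  unfold polarAngle
  split <;> constructor <;> linarith [pi_pos]

lemma polarAngle_zero : polarAngle 0 = 0 := by
  simp [polarAngle]

lemma measurable_polarAngle : Measurable polarAngle := by
  have harg : Measurable fun v : ℝ × ℝ => Complex.arg ((v.1 : ℂ) + (v.2 : ℂ) * Complex.I) :=
    Complex.measurable_arg.comp (by fun_prop)
  exact Measurable.ite (harg measurableSet_Ici) harg (harg.add_const _)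

lemma cos_polarAngle (v : ℝ × ℝ) :
    cos (polarAngle v) = cos (Complex.arg ((v.1 : ℂ) + (v.2 : ℂ) * Complex.I)) := by
  unfold polarAngle; split <;> simp [cos_add_two_pi]

lemma sin_polarAngle (v : ℝ × ℝ) :
    sin (polarAngle v) = sin (Complex.arg ((v.1 : ℂ) + (v.2 : ℂ) * Complex.I)) := by
  unfold polarAngle; split <;> simp [sin_add_two_pi]

lemma exists_pos_eq_smul_polarAngle {v : ℝ × ℝ} (hv : v ≠ 0) :
    ∃ ρ : ℝ, 0 < ρ ∧ v = ρ • (cos (polarAngle v), sin (polarAngle v)) := by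
  set z : ℂ := (v.1 : ℂ) + (v.2 : ℂ) * Complex.I
  have hz : z ≠ 0 := fun h => hv (Prod.ext (by simpa [z] using congrArg Complex.re h)
    (by simpa [z] using congrArg Complex.im h))
  refine ⟨‖z‖, norm_pos_iff.2 hz, Prod.ext ?_ ?_⟩
  · rw [Prod.smul_fst, cos_polarAngle, Complex.cos_arg hz, smul_eq_mul,
      mul_div_cancel₀ _ (norm_ne_zero_iff.2 hz)]
    simp [z]
  · rw [Prod.smul_snd, sin_polarAngle, Complex.sin_arg, smul_eq_mul,
      mul_div_cancel₀ _ (norm_ne_zero_iff.2 hz)]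
    simp

lemma exists_cross_eq_mul_sin {u v : ℝ × ℝ} (hu : u ≠ 0) (hv : v ≠ 0) :
    ∃ ρ : ℝ, 0 < ρ ∧ cross u v = ρ * sin (polarAngle v - polarAngle u) := by
  obtain ⟨ρ, hρ, hu'⟩ := exists_pos_eq_smul_polarAngle hu
  obtain ⟨σ, hσ, hv'⟩ := exists_pos_eq_smul_polarAngle hv
  refine ⟨ρ * σ, mul_pos hρ hσ, ?_⟩
  conv_lhs => rw [hu', hv', cross_smul_left, cross_smul_right, cross]
  rw [sin_sub]; ring

lemma le_neg_pi_or_mem_Icc_of_sin_nonneg {d : ℝ} (hd : d ∈ Ioo (-(2 * π)) (2 * π))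
    (hsin : 0 ≤ sin d) : d ≤ -π ∨ d ∈ Icc 0 π := by
  by_contra! h
  rcases lt_or_ge d 0 with hneg | hpos
  · linarith [sin_neg_of_neg_of_neg_pi_lt hneg h.1]
  · have hπ : π < d := by by_contra! h'; exact h.2 ⟨hpos, h'⟩
    linarith [sin_sub_pi d, sin_pos_of_pos_of_lt_pi (x := d - π) (by linarith) (by linarith [hd.2])]

lemma lt_neg_pi_or_mem_Ioo_of_sin_pos {d : ℝ} (hd : d ∈ Ioo (-(2 * π)) (2 * π))
    (hsin : 0 < sin d) : d < -π ∨ d ∈ Ioo 0 π := by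
  rcases le_neg_pi_or_mem_Icc_of_sin_nonneg hd hsin.le with h | ⟨h0, hπ⟩
  · refine .inl (h.lt_of_ne ?_)
    rintro rfl; simp at hsin
  · refine .inr ⟨h0.lt_of_ne ?_, hπ.lt_of_ne ?_⟩ <;> rintro rfl <;> simp at hsin

lemma polarAngle_sub_mem_Ioo (u v : ℝ × ℝ) :
    polarAngle v - polarAngle u ∈ Ioo (-(2 * π)) (2 * π) := by
  have hu := polarAngle_mem_Ico u
  have hv := polarAngle_mem_Ico v
  constructor <;> linarith [hu.1, hu.2, hv.1, hv.2]

lemma cross_nonneg_of_polarAngle_mem_Icc {u v : ℝ × ℝ} (hu : u ≠ 0) (hv : v ≠ 0)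
    (h : polarAngle v ∈ Icc (polarAngle u) (polarAngle u + π)) : 0 ≤ cross u v := by
  obtain ⟨ρ, hρ, hcross⟩ := exists_cross_eq_mul_sin hu hv
  rw [hcross]
  exact mul_nonneg hρ.le (sin_nonneg_of_nonneg_of_le_pi (by linarith [h.1]) (by linarith [h.2]))

lemma cross_pos_of_polarAngle_mem_Ioo {u v : ℝ × ℝ} (hu : u ≠ 0) (hv : v ≠ 0)
    (h : polarAngle v ∈ Ioo (polarAngle u) (polarAngle u + π)) : 0 < cross u v := by
  obtain ⟨ρ, hρ, hcross⟩ := exists_cross_eq_mul_sin hu hv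
  rw [hcross]
  exact mul_pos hρ (sin_pos_of_pos_of_lt_pi (by linarith [h.1]) (by linarith [h.2]))

lemma polarAngle_mem_Icc_of_cross_nonneg {u v w : ℝ × ℝ} (hu : u ≠ 0) (hv : v ≠ 0) (hw : w ≠ 0)
    (hv_ang : polarAngle v ∈ Ioo (polarAngle u) (polarAngle u + π))
    (huw : 0 ≤ cross u w) (hwv : 0 ≤ cross w v) :
    polarAngle w ∈ Icc (polarAngle u) (polarAngle v) := by
  obtain ⟨ρ, hρ, huw'⟩ := exists_cross_eq_mul_sin hu hw
  obtain ⟨σ, hσ, hwv'⟩ := exists_cross_eq_mul_sin hw hv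
  have h₁ := le_neg_pi_or_mem_Icc_of_sin_nonneg (polarAngle_sub_mem_Ioo u w)
    (nonneg_of_mul_nonneg_right (huw' ▸ huw) hρ)
  have h₂ := le_neg_pi_or_mem_Icc_of_sin_nonneg (polarAngle_sub_mem_Ioo w v)
    (nonneg_of_mul_nonneg_right (hwv' ▸ hwv) hσ)
  have := polarAngle_mem_Ico u
  have := polarAngle_mem_Ico v
  have := polarAngle_mem_Ico w
  simp only [mem_Icc, mem_Ico, mem_Ioo] at *
  constructor <;> rcases h₁ with h₁ | h₁ <;> rcases h₂ with h₂ | h₂ <;> linarith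

lemma polarAngle_mem_Ioo_of_cross_pos {u v : ℝ × ℝ} (hu : u ≠ 0) (hπ : polarAngle u ≤ π)
    (huv : 0 < cross u v) : polarAngle v ∈ Ioo (polarAngle u) (polarAngle u + π) := by
  have hv : v ≠ 0 := by rintro rfl; simp [cross] at huv
  obtain ⟨ρ, hρ, huv'⟩ := exists_cross_eq_mul_sin hu hv
  have h := lt_neg_pi_or_mem_Ioo_of_sin_pos (polarAngle_sub_mem_Ioo u v)
    (pos_of_mul_pos_right (huv' ▸ huv) hρ.le)
  have := polarAngle_mem_Ico v
  simp only [mem_Ico, mem_Ioo] at *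
  rcases h with h | h <;> constructor <;> linarith

def stdTriangle : Set (ℝ × ℝ) := {p | 0 ≤ p.1 ∧ 0 ≤ p.2 ∧ p.1 + p.2 ≤ 1}

lemma volume_stdTriangle : volume stdTriangle = ENNReal.ofReal (1 / 2) := by
  have hmeas : MeasurableSet stdTriangle :=
    (measurableSet_le measurable_const measurable_fst).inter
      ((measurableSet_le measurable_const measurable_snd).inter
        (measurableSet_le (measurable_fst.add measurable_snd) measurable_const))
  have hslice : ∀ x, volume (Prod.mk x ⁻¹' stdTriangle) =
      (Icc 0 1).indicator (fun x => ENNReal.ofReal (1 - x)) x := by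
    intro x
    by_cases hx : x ∈ Icc (0 : ℝ) 1
    · have : Prod.mk x ⁻¹' stdTriangle = Icc 0 (1 - x) := by
        ext y
        simp only [stdTriangle, mem_preimage, mem_ofPred_eq, mem_Icc]
        constructor
        · rintro ⟨-, hy, hxy⟩; exact ⟨hy, by linarith⟩
        · rintro ⟨hy, hxy⟩; exact ⟨hx.1, hy, by linarith⟩
      rw [this, Real.volume_Icc, indicator_of_mem hx, sub_zero]
    · rw [indicator_of_notMem hx, measure_eq_zero_iff_ae_notMem.2]
      exact Eventually.of_forall fun y ⟨hx0, hy, hxy⟩ => hx ⟨hx0, by linarith⟩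
  rw [Measure.volume_eq_prod, Measure.prod_apply hmeas]
  simp_rw [hslice]
  rw [lintegral_indicator measurableSet_Icc, ← ofReal_integral_eq_lintegral_ofReal]
  · rw [integral_Icc_eq_integral_Ioc, ← intervalIntegral.integral_of_le zero_le_one,
      intervalIntegral.integral_sub intervalIntegrable_const intervalIntegral.intervalIntegrable_id]
    norm_num
  · exact (continuous_const.sub continuous_id).integrableOn_Icc
  · exact (ae_restrict_iff' measurableSet_Icc).2
      (Eventually.of_forall fun x hx => sub_nonneg.2 hx.2)

def triangleMap (u v : ℝ × ℝ) : (ℝ × ℝ) →ₗ[ℝ] ℝ × ℝ :=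
  (LinearMap.fst ℝ ℝ ℝ).smulRight u + (LinearMap.snd ℝ ℝ ℝ).smulRight v

lemma triangleMap_apply (u v p : ℝ × ℝ) : triangleMap u v p = p.1 • u + p.2 • v := rfl

lemma det_triangleMap (u v : ℝ × ℝ) : LinearMap.det (triangleMap u v) = cross u v := by
  rw [← LinearMap.det_toMatrix (Module.Basis.finTwoProd ℝ), Matrix.det_fin_two]
  simp [LinearMap.toMatrix_apply, triangleMap_apply, cross]
  ring

def triangle (u v : ℝ × ℝ) : Set (ℝ × ℝ) := triangleMap u v '' stdTriangle

lemma volume_triangle (u v : ℝ × ℝ) : volume (triangle u v) = ENNReal.ofReal (|cross u v| / 2) := by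
  rw [triangle, Measure.addHaar_image_linearMap, det_triangleMap, volume_stdTriangle,
    ← ENNReal.ofReal_mul (abs_nonneg _), mul_one_div]

lemma mem_triangle_of_cross_nonneg {u v w : ℝ × ℝ} (huv : 0 < cross u v) (huw : 0 ≤ cross u w)
    (hwv : 0 ≤ cross w v) (hsum : cross u w + cross w v ≤ cross u v) : w ∈ triangle u v := by
  refine ⟨(cross w v / cross u v, cross u w / cross u v),
    ⟨div_nonneg hwv huv.le, div_nonneg huw huv.le, ?_⟩, ?_⟩
  · rw [← add_div, div_le_one huv]; linarith
  · rw [triangleMap_apply, div_eq_inv_mul, div_eq_inv_mul, mul_smul, mul_smul, ← smul_add,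
      ← cross_smul_eq, inv_smul_smul₀ huv.ne']

lemma triangle_subset {Ω : Set (ℝ × ℝ)} (hconv : Convex ℝ Ω) (h0 : (0 : ℝ × ℝ) ∈ Ω)
    {u v : ℝ × ℝ} (hu : u ∈ Ω) (hv : v ∈ Ω) : triangle u v ⊆ Ω := by
  rintro _ ⟨⟨s, t⟩, ⟨hs, ht, hst⟩, rfl⟩
  have h := hconv.sum_mem (t := Finset.univ) (w := ![1 - s - t, s, t]) (z := ![0, u, v])
    (by intro i _; fin_cases i <;> simp <;> linarith) (by simp [Fin.sum_univ_three]; ring)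
    (by intro i _; fin_cases i <;> simp [h0, hu, hv])
  simpa [Fin.sum_univ_three, triangleMap_apply] using h

lemma exists_supports {Ω : Set (ℝ × ℝ)} (hconv : Convex ℝ Ω) (h0 : (0 : ℝ × ℝ) ∈ interior Ω)
    {a : ℝ × ℝ} (ha : a ∉ interior Ω) : ∃ q, Supports Ω a q := by
  obtain ⟨f, hf⟩ := geometric_hahn_banach_open_point hconv.interior isOpen_interior ha
  have hfa : 0 < f a := by simpa using hf 0 h0
  have hle : ∀ v ∈ Ω, f v ≤ f a := by
    have hΩ : Ω ⊆ closure (interior Ω) := by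
      rw [hconv.closure_interior_eq_closure_of_nonempty_interior ⟨0, h0⟩]
      exact subset_closure
    exact fun v hv => closure_lt_subset_le f.continuous continuous_const (closure_mono hf (hΩ hv))
  have hcoord : ∀ v : ℝ × ℝ, f (1, 0) / f a * v.1 + f (0, 1) / f a * v.2 = f v / f a := by
    intro v
    have hv : v = v.1 • ((1 : ℝ), (0 : ℝ)) + v.2 • ((0 : ℝ), (1 : ℝ)) := by ext <;> simp
    conv_rhs => rw [hv, map_add, map_smul, map_smul, smul_eq_mul, smul_eq_mul]
    ring
  refine ⟨(f (1, 0) / f a, f (0, 1) / f a), ?_, fun v hv => ?_⟩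
  · rw [hcoord, div_self hfa.ne']
  · rw [hcoord, div_le_one hfa]
    exact hle v hv

lemma ne_zero_of_mem_frontier {Ω : Set (ℝ × ℝ)} (h0 : (0 : ℝ × ℝ) ∈ interior Ω) {a : ℝ × ℝ}
    (ha : a ∈ frontier Ω) : a ≠ 0 :=
  fun h => ha.2 (h ▸ h0)

lemma area2_pos {Ω : Set (ℝ × ℝ)} (hcomp : IsCompact Ω) (hΩ : (interior Ω).Nonempty) :
    0 < area2 Ω :=
  ENNReal.toReal_pos ((isOpen_interior.measure_pos volume hΩ).trans_le
    (measure_mono interior_subset)).ne' hcomp.measure_lt_top.ne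

def sectorBetween (Ω : Set (ℝ × ℝ)) (α β : ℝ) : Set (ℝ × ℝ) :=
  {v | v ∈ Ω ∧ polarAngle v ∈ Ioc α β}

lemma sectorArea_sub {Ω : Set (ℝ × ℝ)} (hΩ : MeasurableSet Ω) (hfin : volume Ω ≠ ⊤) {α β : ℝ}
    (hαβ : α ≤ β) :
    sectorArea Ω β - sectorArea Ω α = (volume (sectorBetween Ω α β)).toReal := by
  have hunion : {v | v ∈ Ω ∧ polarAngle v ≤ β} =
      {v | v ∈ Ω ∧ polarAngle v ≤ α} ∪ sectorBetween Ω α β := by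
    ext v
    simp only [sectorBetween, mem_union, mem_ofPred_eq, mem_Ioc]
    constructor
    · rintro ⟨hv, hvβ⟩
      rcases le_or_gt (polarAngle v) α with h | h
      exacts [.inl ⟨hv, h⟩, .inr ⟨hv, h, hvβ⟩]
    · rintro (⟨hv, h⟩ | ⟨hv, -, h⟩)
      exacts [⟨hv, h.trans hαβ⟩, ⟨hv, h⟩]
  have hdisj : Disjoint {v | v ∈ Ω ∧ polarAngle v ≤ α} (sectorBetween Ω α β) :=
    disjoint_left.2 fun v hv hv' => not_lt.2 hv.2 hv'.2.1
  have hfin' : ∀ s ⊆ Ω, volume s ≠ ⊤ := fun s hs => ne_top_of_le_ne_top hfin (measure_mono hs)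
  rw [sectorArea, sectorArea, hunion,
    measure_union hdisj (hΩ.inter (measurable_polarAngle measurableSet_Ioc)),
    ENNReal.toReal_add (hfin' _ fun v hv => hv.1) (hfin' _ fun v hv => hv.1), add_sub_cancel_left]

lemma lt_of_sectorArea_lt {Ω : Set (ℝ × ℝ)} (hfin : volume Ω ≠ ⊤) {α β : ℝ}
    (h : sectorArea Ω α < sectorArea Ω β) : α < β := by
  by_contra! hβα
  exact h.not_ge (ENNReal.toReal_mono (ne_top_of_le_ne_top hfin (measure_mono fun v hv => hv.1))
    (measure_mono fun v hv => ⟨hv.1, hv.2.trans hβα⟩))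

lemma volume_span_singleton (u : ℝ × ℝ) : volume (Submodule.span ℝ {u} : Set (ℝ × ℝ)) = 0 := by
  refine Measure.addHaar_submodule _ _ fun h => ?_
  have hrank := finrank_span_le_card (R := ℝ) ({u} : Set (ℝ × ℝ))
  rw [h, finrank_top, Module.finrank_prod, Module.finrank_self] at hrank
  simp at hrank

lemma volume_triangle_le_sectorBetween {Ω : Set (ℝ × ℝ)} (hconv : Convex ℝ Ω)
    (h0 : (0 : ℝ × ℝ) ∈ Ω) {a b : ℝ × ℝ} (ha : a ∈ Ω) (hb : b ∈ Ω) (ha0 : a ≠ 0) (hb0 : b ≠ 0)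
    (hab : polarAngle b ∈ Ioo (polarAngle a) (polarAngle a + π)) :
    volume (triangle a b) ≤ volume (sectorBetween Ω (polarAngle a) (polarAngle b)) := by
  have hab' : 0 < cross a b := cross_pos_of_polarAngle_mem_Ioo ha0 hb0 hab
  have hsub : triangle a b ⊆
      sectorBetween Ω (polarAngle a) (polarAngle b) ∪ Submodule.span ℝ {a} := by
    rintro _ ⟨⟨s, t⟩, ⟨hs, ht, hst⟩, rfl⟩
    rw [triangleMap_apply]
    rcases ht.eq_or_lt with rfl | ht
    · exact .inr (by simpa using Submodule.smul_mem _ s (Submodule.mem_span_singleton_self a))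
    have hax : 0 < cross a (s • a + t • b) := by rw [cross_add_smul]; positivity
    have hx0 : s • a + t • b ≠ 0 := by rintro h; simp [h, cross] at hax
    have hxb : 0 ≤ cross (s • a + t • b) b := by rw [cross_smul_add]; positivity
    obtain ⟨hαx, hxβ⟩ := polarAngle_mem_Icc_of_cross_nonneg ha0 hb0 hx0 hab hax.le hxb
    refine .inl ⟨triangle_subset hconv h0 ha hb ⟨(s, t), ⟨hs, ht.le, hst⟩, rfl⟩,
      hαx.lt_of_ne fun h => ?_, hxβ⟩
    obtain ⟨ρ, -, hρ⟩ := exists_cross_eq_mul_sin ha0 hx0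
    simp [hρ, ← h] at hax
  calc volume (triangle a b)
      ≤ volume (sectorBetween Ω (polarAngle a) (polarAngle b) ∪ Submodule.span ℝ {a}) :=
        measure_mono hsub
    _ ≤ volume (sectorBetween Ω (polarAngle a) (polarAngle b)) + 0 := by
        rw [← volume_span_singleton a]; exact measure_union_le _ _
    _ = _ := add_zero _

lemma sectorBetween_subset_triangle {Ω : Set (ℝ × ℝ)} {a b q : ℝ × ℝ} (hq : Supports Ω a q)
    (ha0 : a ≠ 0) (hb0 : b ≠ 0) (hqb : 0 < q.1 * b.1 + q.2 * b.2)
    (hab : polarAngle b ∈ Ioo (polarAngle a) (polarAngle a + π)) :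
    sectorBetween Ω (polarAngle a) (polarAngle b) ⊆
      triangle a ((q.1 * b.1 + q.2 * b.2)⁻¹ • b) := by
  rintro v ⟨hv, hαv, hvβ⟩
  set c := (q.1 * b.1 + q.2 * b.2)⁻¹
  have hv0 : v ≠ 0 := by
    rintro rfl; rw [polarAngle_zero] at hαv; linarith [(polarAngle_mem_Ico a).1]
  have hav : 0 ≤ cross a v :=
    cross_nonneg_of_polarAngle_mem_Icc ha0 hv0 ⟨hαv.le, by linarith [hab.2]⟩
  have hvb : 0 ≤ cross v b :=
    cross_nonneg_of_polarAngle_mem_Icc hv0 hb0 ⟨hvβ, by linarith [hab.2]⟩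
  have hc : 0 < c := inv_pos.2 hqb
  have hap : 0 < cross a (c • b) :=
    cross_smul_right a b c ▸ mul_pos hc (cross_pos_of_polarAngle_mem_Ioo ha0 hb0 hab)
  have hvp : 0 ≤ cross v (c • b) := cross_smul_right v b c ▸ mul_nonneg hc.le hvb
  refine mem_triangle_of_cross_nonneg hap hav hvp ?_
  -- Cramer's rule `cross a p • v = cross v p • a + cross a v • p`, paired with `q`
  have hcramer : cross a (c • b) * (q.1 * v.1 + q.2 * v.2) =
      cross v (c • b) * (q.1 * a.1 + q.2 * a.2) +
        cross a v * (c * (q.1 * b.1 + q.2 * b.2)) := by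
    simp only [cross, Prod.smul_fst, Prod.smul_snd, smul_eq_mul]; ring
  rw [hq.1, inv_mul_cancel₀ hqb.ne', mul_one, mul_one] at hcramer
  nlinarith [hq.2 v hv]

lemma volume_interior_inter_cross_pos {Ω : Set (ℝ × ℝ)} (h0 : (0 : ℝ × ℝ) ∈ interior Ω)
    {a : ℝ × ℝ} (ha : a ≠ 0) : 0 < volume (interior Ω ∩ {v | 0 < cross a v}) := by
  have hopen : IsOpen (interior Ω ∩ {v | 0 < cross a v}) :=
    isOpen_interior.inter (isOpen_lt continuous_const (by unfold cross; fun_prop))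
  have hw : 0 < cross a (-a.2, a.1) := by
    have : a.1 ≠ 0 ∨ a.2 ≠ 0 := by
      by_contra! h; exact ha (Prod.ext h.1 h.2)
    simp only [cross]
    rcases this with h | h <;>
      nlinarith [mul_self_pos.2 h, mul_self_nonneg a.1, mul_self_nonneg a.2]
  have hsmall : ∀ᶠ t : ℝ in 𝓝[>] 0, t • ((-a.2, a.1) : ℝ × ℝ) ∈ interior Ω := by
    have hcont : Tendsto (fun t : ℝ => t • ((-a.2, a.1) : ℝ × ℝ)) (𝓝 0) (𝓝 0) :=
      (continuous_id.smul continuous_const).tendsto' 0 0 (zero_smul ℝ _)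
    exact (hcont.eventually (isOpen_interior.mem_nhds h0)).filter_mono nhdsWithin_le_nhds
  obtain ⟨t, htΩ, ht⟩ := (hsmall.and self_mem_nhdsWithin).exists
  refine hopen.measure_pos _ ⟨t • (-a.2, a.1), htΩ, ?_⟩
  rw [mem_ofPred_eq, cross_smul_right]
  exact mul_pos ht hw

lemma interior_inter_cross_pos_subset_sectorBetween {Ω : Set (ℝ × ℝ)} {a : ℝ × ℝ} (ha : a ≠ 0)
    {β : ℝ} (hβ : polarAngle a + π ≤ β) (hβ' : β < 2 * π) :
    interior Ω ∩ {v | 0 < cross a v} ⊆ sectorBetween Ω (polarAngle a) β := by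
  rintro v ⟨hvΩ, hav⟩
  obtain ⟨h₁, h₂⟩ := polarAngle_mem_Ioo_of_cross_pos ha (by linarith) hav
  exact ⟨interior_subset hvΩ, h₁, by linarith⟩

lemma cross_le_and_le_cross_of_sectorArea_sub {Ω : Set (ℝ × ℝ)} (hcomp : IsCompact Ω)
    (hconv : Convex ℝ Ω) (h0 : (0 : ℝ × ℝ) ∈ interior Ω) {a b q : ℝ × ℝ}
    (ha : a ∈ frontier Ω) (hb : b ∈ frontier Ω) (hq : Supports Ω a q)
    (hqb : 0 < q.1 * b.1 + q.2 * b.2) {δ : ℝ} (hδ : 0 < δ)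
    (hδ_small : δ < 2 * (volume (interior Ω ∩ {v | 0 < cross a v})).toReal)
    (harea : sectorArea Ω (polarAngle b) - sectorArea Ω (polarAngle a) = δ / 2) :
    cross a b ≤ δ ∧ δ * (q.1 * b.1 + q.2 * b.2) ≤ cross a b := by
  have hfin : volume Ω ≠ ⊤ := hcomp.measure_lt_top.ne
  have hfin' : ∀ s ⊆ Ω, volume s ≠ ⊤ := fun s hs => ne_top_of_le_ne_top hfin (measure_mono hs)
  have ha0 := ne_zero_of_mem_frontier h0 ha
  have hb0 := ne_zero_of_mem_frontier h0 hb
  have hαβ : polarAngle a < polarAngle b := lt_of_sectorArea_lt hfin (by linarith)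
  rw [sectorArea_sub hcomp.isClosed.measurableSet hfin hαβ.le] at harea
  -- otherwise the sector would contain `interior Ω ∩ {v | 0 < cross a v}`
  have hgap : polarAngle b < polarAngle a + π := by
    by_contra! h
    have := ENNReal.toReal_mono (hfin' _ fun v hv => hv.1) <| measure_mono
      (interior_inter_cross_pos_subset_sectorBetween (Ω := Ω) ha0 h (polarAngle_mem_Ico b).2)
    linarith
  have hab : polarAngle b ∈ Ioo (polarAngle a) (polarAngle a + π) := ⟨hαβ, hgap⟩
  have hcross : 0 < cross a b := cross_pos_of_polarAngle_mem_Ioo ha0 hb0 hab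
  constructor
  · have := ENNReal.toReal_mono (hfin' _ fun v hv => hv.1) <| volume_triangle_le_sectorBetween
      hconv (interior_subset h0) (hcomp.isClosed.frontier_subset ha)
      (hcomp.isClosed.frontier_subset hb) ha0 hb0 hab
    rw [volume_triangle, ENNReal.toReal_ofReal (by positivity), abs_of_pos hcross, harea] at this
    linarith
  · have := ENNReal.toReal_mono (by rw [volume_triangle]; exact ENNReal.ofReal_ne_top) <|
      measure_mono (sectorBetween_subset_triangle hq ha0 hb0 hqb hab)
    rw [volume_triangle, ENNReal.toReal_ofReal (by positivity), cross_smul_right,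
      abs_of_pos (mul_pos (inv_pos.2 hqb) hcross), harea] at this
    rw [← le_div_iff₀ hqb, ← inv_mul_eq_div]
    linarith

lemma eq_one_of_eventually_le_sub_of_sub_mul_le {φ g : ℝ → ℝ} {κ x : ℝ} (hφ : HasDerivAt φ κ x)
    (hφx : φ x = 0) (hg : ContinuousAt g x) (hgx : g x = 1)
    (hbound : ∀ᶠ t in 𝓝[>] x, φ t ≤ t - x ∧ (t - x) * g t ≤ φ t) : κ = 1 := by
  have hslope : Tendsto (fun t => φ t / (t - x)) (𝓝[>] x) (𝓝 κ) := by
    refine ((hasDerivAt_iff_tendsto_slope.1 hφ).mono_left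
      (nhdsWithin_mono x fun t ht => ne_of_gt ht)).congr fun t => ?_
    rw [slope_def_field, hφx, sub_zero]
  have hg' : Tendsto g (𝓝[>] x) (𝓝 1) := hgx ▸ hg.tendsto.mono_left nhdsWithin_le_nhds
  refine le_antisymm (le_of_tendsto hslope ?_) (le_of_tendsto_of_tendsto hg' hslope ?_)
  · filter_upwards [hbound, self_mem_nhdsWithin] with t ht (hxt : x < t)
    exact (div_le_one (sub_pos.2 hxt)).2 ht.1
  · filter_upwards [hbound, self_mem_nhdsWithin] with t ht (hxt : x < t)
    exact (le_div_iff₀' (sub_pos.2 hxt)).2 ht.2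

lemma eventually_cross_le_and_le_cross {Ω : Set (ℝ × ℝ)} (hcomp : IsCompact Ω)
    (hconv : Convex ℝ Ω) (h0 : (0 : ℝ × ℝ) ∈ interior Ω) {P : ℝ → ℝ × ℝ} (hP : IsCT Ω P)
    {θ₀ : ℝ} (hθ₀ : θ₀ ∈ Ico 0 (2 * area2 Ω)) (hcont : ContinuousAt P θ₀) {q : ℝ × ℝ}
    (hq : Supports Ω (P θ₀) q) :
    ∀ᶠ t in 𝓝[>] θ₀, cross (P θ₀) (P t) ≤ t - θ₀ ∧
      (t - θ₀) * (q.1 * (P t).1 + q.2 * (P t).2) ≤ cross (P θ₀) (P t) := by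
  obtain ⟨ha, harea⟩ := hP.2 θ₀ hθ₀
  have ha0 := ne_zero_of_mem_frontier h0 ha
  set c₀ := (volume (interior Ω ∩ {v | 0 < cross (P θ₀) v})).toReal
  have hc₀ : 0 < c₀ := ENNReal.toReal_pos (volume_interior_inter_cross_pos h0 ha0).ne'
    (ne_top_of_le_ne_top hcomp.measure_lt_top.ne (measure_mono fun v hv => interior_subset hv.1))
  have hqP : ∀ᶠ t in 𝓝[>] θ₀, 0 < q.1 * (P t).1 + q.2 * (P t).2 := by
    have hg : ContinuousAt (fun t => q.1 * (P t).1 + q.2 * (P t).2) θ₀ := by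
      fun_prop
    exact (hg.eventually (lt_mem_nhds (by simp [hq.1]))).filter_mono nhdsWithin_le_nhds
  have hsmall : ∀ᶠ t in 𝓝[>] θ₀, t ∈ Ioo θ₀ (min (2 * area2 Ω) (θ₀ + 2 * c₀)) :=
    Ioo_mem_nhdsGT (lt_min hθ₀.2 (by linarith))
  filter_upwards [hqP, hsmall] with t hqt ⟨hθ₀t, ht⟩
  obtain ⟨hb, hbarea⟩ := hP.2 t ⟨by linarith [hθ₀.1], ht.trans_le (min_le_left _ _)⟩
  refine cross_le_and_le_cross_of_sectorArea_sub hcomp hconv h0 ha hb hq hqt (sub_pos.2 hθ₀t)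
    ?_ (by rw [hbarea, harea]; ring)
  linarith [ht.trans_le (min_le_right _ _)]

end GeneralizedPolar

open GeneralizedPolar in
/-- The Jacobian determinant of the generalized polar change of coordinates
`x = r cos_Ω θ`, `y = r sin_Ω θ` equals `r` at every point where
`θ ↦ (cos_Ω θ, sin_Ω θ)` is differentiable. -/
theorem stmt9 (Ω : Set (ℝ × ℝ)) (hcomp : IsCompact Ω) (hconv : Convex ℝ Ω)
    (h0 : (0 : ℝ × ℝ) ∈ interior Ω)
    (P : ℝ → ℝ × ℝ) (hP : IsCT Ω P)
    (r θ c' s' : ℝ)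
    (hc : HasDerivAt (fun t => (P t).1) c' θ)
    (hs : HasDerivAt (fun t => (P t).2) s' θ) :
    Matrix.det !![(P θ).1, r * c'; (P θ).2, r * s'] = r := by
  have hT : 0 < 2 * area2 Ω := mul_pos two_pos (area2_pos hcomp ⟨0, h0⟩)
  have hper : Function.Periodic P (2 * area2 Ω) := hP.1
  set θ₀ := toIcoMod hT 0 θ
  have hθ₀ : θ₀ ∈ Ico 0 (2 * area2 Ω) := by simpa using toIcoMod_mem_Ico hT 0 θ
  have hc₀ := (hper.comp Prod.fst).hasDerivAt_toIcoMod hT hc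
  have hs₀ := (hper.comp Prod.snd).hasDerivAt_toIcoMod hT hs
  obtain ⟨q, hq⟩ := exists_supports hconv h0 (hP.2 θ₀ hθ₀).1.2
  have hκ : (P θ₀).1 * s' - (P θ₀).2 * c' = 1 :=
    eq_one_of_eventually_le_sub_of_sub_mul_le (φ := fun t => cross (P θ₀) (P t))
      ((hs₀.const_mul _).sub (hc₀.const_mul _)) (cross_self _)
      ((hc₀.continuousAt.const_mul _).add (hs₀.continuousAt.const_mul _)) hq.1
      (eventually_cross_le_and_le_cross hcomp hconv h0 hP hθ₀
        (hc₀.continuousAt.prodMk hs₀.continuousAt) hq)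
  rw [Matrix.det_fin_two_of, ← hper.sub_zsmul_eq (toIcoDiv hT 0 θ), self_sub_toIcoDiv_zsmul]
  linear_combination r * hκ
end

section
/- For 1 < p < ∞, the generalized angle of the unit Lp-ball Ω at parameter φ ∈ [0, π/4] is θ(φ) = (1/p)·4^{−1/p}·B(sin² 2φ; 1/p, 1/2), where B(x; a, b) = ∫₀ˣ t^{a−1}(1−t)^{b−1} dt is the incomplete Euler beta function. -/
open MeasureTheory Real Set

/-- The unit ball of the `Lᵖ` norm on `ℝ²`. -/
noncomputable def lpBall (p : ℝ) : Set (ℝ × ℝ) := {v | |v.1| ^ p + |v.2| ^ p ≤ 1}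

/-- Parametrization of the boundary of the `Lᵖ` ball:
`u(φ) = |cos φ|^{2/p} sgn (cos φ)`. -/
noncomputable def uLp (p φ : ℝ) : ℝ := |Real.cos φ| ^ (2 / p) * Real.sign (Real.cos φ)

/-- `v(φ) = |sin φ|^{2/p} sgn (sin φ)`. -/
noncomputable def vLp (p φ : ℝ) : ℝ := |Real.sin φ| ^ (2 / p) * Real.sign (Real.sin φ)

/-- The generalized angle `θ(φ)`: twice the area of the sector of the `Lᵖ` ball between
the positive `x`-axis and the boundary point `(u(φ), v(φ))`. -/
noncomputable def θLp (p φ : ℝ) : ℝ :=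
  2 * sectorArea (lpBall p) (polarAngle (uLp p φ, vLp p φ))

/-!
For `0 ≤ φ ≤ π/4` the boundary point is `(u, v)` with `u = cos^{2/p} φ` and
`v = (1 - u^p)^{1/p}`. The sector is the region under `min (chord, arc)` over `[0, 1]`, i.e. the
triangle under the chord through `(u, v)` plus the region under the arc over `[u, 1]`, so
`θ = u v + 2 ∫_u^1 (1 - x^p)^{1/p} dx`. Differentiating `x (1 - x^p)^{1/p}` turns this into
`∫_u^1 (1 - x^p)^{1/p - 1} dx`, and the substitution `t = 4 x^p (1 - x^p)`, which is monotone on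
`[u, 1]` because `u^p = cos² φ ≥ 1/2`, yields the incomplete beta integral up to
`t = 4 cos² φ sin² φ = sin² 2φ`.
-/

lemma Complex.arg_eq_arctan_of_re_pos {z : ℂ} (hz : 0 < z.re) :
    z.arg = Real.arctan (z.im / z.re) := by
  have h := Complex.abs_arg_lt_pi_div_two_iff.2 (Or.inl hz)
  rw [abs_lt] at h
  rw [← Complex.tan_arg, Real.arctan_tan h.1 h.2]

lemma polarAngle_of_snd_nonneg {w : ℝ × ℝ} (hw : 0 ≤ w.2) :
    polarAngle w = Complex.arg (w.1 + w.2 * Complex.I) :=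
  if_pos (Complex.arg_nonneg_iff.2 (by simpa using hw))

lemma polarAngle_of_fst_pos {w : ℝ × ℝ} (h₁ : 0 < w.1) (h₂ : 0 ≤ w.2) :
    polarAngle w = Real.arctan (w.2 / w.1) := by
  rw [polarAngle_of_snd_nonneg h₂, Complex.arg_eq_arctan_of_re_pos (by simpa using h₁)]
  simp

lemma polarAngle_le_polarAngle_iff {u v : ℝ} (hu : 0 < u) (hv : 0 ≤ v) (w : ℝ × ℝ) :
    polarAngle w ≤ polarAngle (u, v) ↔ 0 ≤ w.1 ∧ 0 ≤ w.2 ∧ w.2 * u ≤ w.1 * v := by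
  rw [polarAngle_of_fst_pos (w := (u, v)) hu hv]
  have h_lt : Real.arctan (v / u) < π / 2 := Real.arctan_lt_pi_div_two _
  rcases lt_or_ge w.2 0 with h₂ | h₂
  · have : π < polarAngle w := by
      rw [polarAngle, if_neg (by simpa [Complex.arg_nonneg_iff] using h₂)]
      linarith [Complex.neg_pi_lt_arg (w.1 + w.2 * Complex.I)]
    constructor
    · intro h; linarith [pi_pos]
    · rintro ⟨-, h, -⟩; linarith
  rcases lt_or_ge 0 w.1 with h₁ | h₁
  · rw [polarAngle_of_fst_pos h₁ h₂, Real.arctan_le_arctan_iff, div_le_div_iff₀ h₁ hu]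
    simp only [h₁.le, h₂, true_and, mul_comm v]
  rcases eq_or_ne w 0 with rfl | hw
  · simp [polarAngle, Real.arctan_nonneg.2 (div_nonneg hv hu.le)]
  have h_ge : π / 2 ≤ polarAngle w := by
    have h_arg := Complex.abs_arg_lt_pi_div_two_iff (z := w.1 + w.2 * Complex.I)
    have h_nonneg : 0 ≤ Complex.arg (w.1 + w.2 * Complex.I) :=
      Complex.arg_nonneg_iff.2 (by simpa using h₂)
    rw [polarAngle_of_snd_nonneg h₂, ← abs_of_nonneg h_nonneg, ← not_lt, h_arg]
    rintro (h | h)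
    · exact absurd (by simpa using h : 0 < w.1) (not_lt.2 h₁)
    · exact hw (Prod.ext (by simpa using congrArg Complex.re h)
        (by simpa using congrArg Complex.im h))
  constructor
  · intro h; linarith
  · rintro ⟨h₁', h₂', h⟩
    have h₁0 : w.1 = 0 := le_antisymm h₁ h₁'
    have h₂0 : w.2 = 0 := by
      rw [h₁0, zero_mul] at h
      nlinarith
    exact absurd (Prod.ext h₁0 h₂0) hw

lemma volume_region_between_cc_eq_integral {f g : ℝ → ℝ} {s : Set ℝ} (hf : Measurable f)
    (hg : Measurable g) (hs : MeasurableSet s) (f_int : IntegrableOn f s)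
    (g_int : IntegrableOn g s) (hfg : ∀ x ∈ s, f x ≤ g x) :
    volume {w : ℝ × ℝ | w.1 ∈ s ∧ w.2 ∈ Icc (f w.1) (g w.1)}
      = ENNReal.ofReal (∫ x in s, (g - f) x) := by
  have h_slice : ∀ x, volume (Prod.mk x ⁻¹' {w : ℝ × ℝ | w.1 ∈ s ∧ w.2 ∈ Icc (f w.1) (g w.1)})
      = s.indicator (fun x => ENNReal.ofReal ((g - f) x)) x := by
    intro x
    by_cases hx : x ∈ s
    · have : Prod.mk x ⁻¹' {w : ℝ × ℝ | w.1 ∈ s ∧ w.2 ∈ Icc (f w.1) (g w.1)} = Icc (f x) (g x) :=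
        by ext; simp [hx]
      rw [this, Real.volume_Icc, indicator_of_mem hx, Pi.sub_apply]
    · simp [hx, preimage]
  rw [Measure.volume_eq_prod, Measure.prod_apply (measurableSet_region_between_cc hf hg hs),
    lintegral_congr h_slice, lintegral_indicator hs, ofReal_integral_eq_lintegral_ofReal
      (g_int.sub f_int) (ae_restrict_of_forall_mem hs fun x hx => sub_nonneg.2 (hfg x hx))]

noncomputable def lpArc (p x : ℝ) : ℝ := (1 - x ^ p) ^ (1 / p)

section lpArc

variable {p x : ℝ}

lemma continuous_lpArc (hp : 0 < p) : Continuous (lpArc p) :=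
  (continuous_const.sub (continuous_id.rpow_const fun _ => Or.inr hp.le)).rpow_const
    fun _ => Or.inr (by positivity)

lemma lpArc_nonneg (hp : 0 < p) (hx₀ : 0 ≤ x) (hx₁ : x ≤ 1) : 0 ≤ lpArc p x :=
  rpow_nonneg (sub_nonneg.2 (rpow_le_one hx₀ hx₁ hp.le)) _

lemma lpArc_rpow (hp : 0 < p) (hx₀ : 0 ≤ x) (hx₁ : x ≤ 1) : lpArc p x ^ p = 1 - x ^ p := by
  rw [lpArc, ← rpow_mul (sub_nonneg.2 (rpow_le_one hx₀ hx₁ hp.le)), one_div_mul_cancel hp.ne',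
    rpow_one]

lemma lpArc_one (hp : 0 < p) : lpArc p 1 = 0 := by
  rw [lpArc, one_rpow, sub_self, zero_rpow (by positivity)]

lemma rpow_add_rpow_le_one_iff (hp : 0 < p) {y : ℝ} (hx : 0 ≤ x) (hy : 0 ≤ y) :
    x ^ p + y ^ p ≤ 1 ↔ x ≤ 1 ∧ y ≤ lpArc p x := by
  constructor
  · intro h
    have hx₁ : x ≤ 1 := by
      rw [← rpow_le_rpow_iff hx zero_le_one hp, one_rpow]
      linarith [rpow_nonneg hy p]
    refine ⟨hx₁, ?_⟩
    rw [← rpow_le_rpow_iff hy (lpArc_nonneg hp hx hx₁) hp, lpArc_rpow hp hx hx₁]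
    linarith
  · rintro ⟨hx₁, hy₁⟩
    have := rpow_le_rpow hy hy₁ hp.le
    rw [lpArc_rpow hp hx hx₁] at this
    linarith

lemma rpow_mul_lpArc_div {u : ℝ} (hp : 0 < p) (hx : 0 ≤ x) (hu₀ : 0 < u) (hu₁ : u ≤ 1) :
    (x * (lpArc p u / u)) ^ p = (x / u) ^ p - x ^ p := by
  rw [mul_rpow hx (div_nonneg (lpArc_nonneg hp hu₀.le hu₁) hu₀.le),
    div_rpow (lpArc_nonneg hp hu₀.le hu₁) hu₀.le, lpArc_rpow hp hu₀.le hu₁, div_rpow hx hu₀.le]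
  field_simp [(rpow_pos_of_pos hu₀ p).ne']

lemma mul_lpArc_div_le_lpArc_iff {u : ℝ} (hp : 0 < p) (hx₀ : 0 ≤ x) (hx₁ : x ≤ 1) (hu₀ : 0 < u)
    (hu₁ : u ≤ 1) : x * (lpArc p u / u) ≤ lpArc p x ↔ x ≤ u := by
  rw [← rpow_le_rpow_iff (by have := lpArc_nonneg hp hu₀.le hu₁; positivity)
    (lpArc_nonneg hp hx₀ hx₁) hp, rpow_mul_lpArc_div hp hx₀ hu₀ hu₁, lpArc_rpow hp hx₀ hx₁,
    sub_le_sub_iff_right, ← one_rpow p, rpow_le_rpow_iff (by positivity) zero_le_one hp,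
    div_le_one hu₀]

lemma lpArc_le_mul_lpArc_div_iff {u : ℝ} (hp : 0 < p) (hx₀ : 0 ≤ x) (hx₁ : x ≤ 1) (hu₀ : 0 < u)
    (hu₁ : u ≤ 1) : lpArc p x ≤ x * (lpArc p u / u) ↔ u ≤ x := by
  rw [← rpow_le_rpow_iff (lpArc_nonneg hp hx₀ hx₁)
    (by have := lpArc_nonneg hp hu₀.le hu₁; positivity) hp, rpow_mul_lpArc_div hp hx₀ hu₀ hu₁,
    lpArc_rpow hp hx₀ hx₁, sub_le_sub_iff_right, ← one_rpow p,
    rpow_le_rpow_iff zero_le_one (by positivity) hp, one_le_div hu₀]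

end lpArc

lemma sectorArea_lpBall {p u : ℝ} (hp : 0 < p) (hu₀ : 0 < u) (hu₁ : u ≤ 1) :
    sectorArea (lpBall p) (polarAngle (u, lpArc p u))
      = u * lpArc p u / 2 + ∫ x in u..1, lpArc p x := by
  set v := lpArc p u
  have hv : 0 ≤ v := lpArc_nonneg hp hu₀.le hu₁
  set g : ℝ → ℝ := fun x => min (x * (v / u)) (lpArc p x)
  have hg : Continuous g :=
    (continuous_id.mul continuous_const).min (continuous_lpArc hp)
  have h_sector : {w | w ∈ lpBall p ∧ polarAngle w ≤ polarAngle (u, v)}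
      = {w : ℝ × ℝ | w.1 ∈ Icc 0 1 ∧ w.2 ∈ Icc ((fun _ => (0 : ℝ)) w.1) (g w.1)} := by
    ext ⟨x, y⟩
    simp only [lpBall, mem_ofPred_eq, polarAngle_le_polarAngle_iff hu₀ hv, mem_Icc, g, le_min_iff,
      mul_div_assoc', le_div_iff₀ hu₀]
    constructor
    · rintro ⟨hball, hx, hy, hline⟩
      rw [abs_of_nonneg hx, abs_of_nonneg hy, rpow_add_rpow_le_one_iff hp hx hy] at hball
      exact ⟨⟨hx, hball.1⟩, hy, hline, hball.2⟩
    · rintro ⟨⟨hx, hx₁⟩, hy, hline, harc⟩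
      rw [abs_of_nonneg hx, abs_of_nonneg hy, rpow_add_rpow_le_one_iff hp hx hy]
      exact ⟨⟨hx₁, harc⟩, hx, hy, hline⟩
  have hg_nonneg : ∀ x ∈ Icc (0 : ℝ) 1, 0 ≤ g x := fun x hx =>
    le_min (mul_nonneg hx.1 (div_nonneg hv hu₀.le)) (lpArc_nonneg hp hx.1 hx.2)
  have h_chord : ∫ x in (0 : ℝ)..u, g x = ∫ x in (0 : ℝ)..u, x * (v / u) :=
    intervalIntegral.integral_congr fun x hx => by
      rw [uIcc_of_le hu₀.le] at hx
      exact min_eq_left ((mul_lpArc_div_le_lpArc_iff hp hx.1 (hx.2.trans hu₁) hu₀ hu₁).2 hx.2)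
  have h_arc : ∫ x in u..1, g x = ∫ x in u..1, lpArc p x :=
    intervalIntegral.integral_congr fun x hx => by
      rw [uIcc_of_le hu₁] at hx
      exact min_eq_right ((lpArc_le_mul_lpArc_div_iff hp (hu₀.le.trans hx.1) hx.2 hu₀ hu₁).2 hx.1)
  rw [sectorArea, h_sector, volume_region_between_cc_eq_integral measurable_const hg.measurable
    measurableSet_Icc (integrableOn_const measure_Icc_lt_top.ne) hg.integrableOn_Icc hg_nonneg,
    ENNReal.toReal_ofReal (setIntegral_nonneg measurableSet_Icc fun x hx => by
      simpa using hg_nonneg x hx)]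
  simp only [Pi.sub_apply, sub_zero]
  rw [integral_Icc_eq_integral_Ioc, ← intervalIntegral.integral_of_le zero_le_one,
    ← intervalIntegral.integral_add_adjacent_intervals (hg.intervalIntegrable 0 u)
      (hg.intervalIntegrable u 1), h_chord, h_arc, intervalIntegral.integral_mul_const,
    integral_id]
  field_simp
  ring

lemma intervalIntegrable_one_sub_rpow_rpow {p e : ℝ} (hp : 1 ≤ p) (he : -1 < e) (he₀ : e ≤ 0) :
    IntervalIntegrable (fun x => (1 - x ^ p) ^ e) volume 0 1 := by
  have h_dom : IntervalIntegrable (fun x => (1 - x) ^ e) volume 0 1 := by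
    simpa using (intervalIntegral.intervalIntegrable_rpow' he (a := 1) (b := 0)).comp_sub_left 1
  rw [intervalIntegrable_iff_integrableOn_Ioo_of_le zero_le_one] at h_dom ⊢
  refine h_dom.mono' (Measurable.aestronglyMeasurable (by fun_prop))
    (ae_restrict_of_forall_mem measurableSet_Ioo fun x hx => ?_)
  have hx_le : x ^ p ≤ x := by
    simpa using rpow_le_rpow_of_exponent_ge hx.1 hx.2.le hp
  rw [norm_of_nonneg (rpow_nonneg (sub_nonneg.2 (rpow_le_one hx.1.le hx.2.le (by linarith))) e)]
  exact rpow_le_rpow_of_nonpos (by linarith [hx.2]) (by linarith) he₀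

lemma intervalIntegrable_one_sub_rpow_rpow_one_div_sub_one {p u : ℝ} (hp : 1 ≤ p) (hu₀ : 0 ≤ u)
    (hu₁ : u ≤ 1) : IntervalIntegrable (fun x => (1 - x ^ p) ^ (1 / p - 1)) volume u 1 := by
  have hp₀ : 0 < p := by linarith
  refine (intervalIntegrable_one_sub_rpow_rpow hp (by linarith [one_div_pos.2 hp₀])
    (by linarith [(div_le_one hp₀).2 hp])).mono_set ?_
  simpa [uIcc_of_le, hu₁] using Icc_subset_Icc hu₀ le_rfl

lemma hasDerivAt_lpArc {p x : ℝ} (hp : 0 < p) (hx₀ : 0 < x) (hx₁ : x < 1) :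
    HasDerivAt (lpArc p) (-(x ^ p / x * (lpArc p x / (1 - x ^ p)))) x := by
  have hA : 1 - x ^ p ≠ 0 := (sub_pos.2 (rpow_lt_one hx₀.le hx₁ hp)).ne'
  have h := ((hasDerivAt_rpow_const (p := p) (Or.inl hx₀.ne')).const_sub 1).rpow_const
    (p := 1 / p) (Or.inl hA)
  unfold lpArc
  convert h using 1
  rw [rpow_sub_one hA, rpow_sub_one hx₀.ne']
  field_simp

lemma integral_one_sub_rpow_rpow_one_div_sub_one {p u : ℝ} (hp : 1 ≤ p) (hu₀ : 0 ≤ u)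
    (hu₁ : u ≤ 1) :
    ∫ x in u..1, (1 - x ^ p) ^ (1 / p - 1) = u * lpArc p u + 2 * ∫ x in u..1, lpArc p x := by
  have hp₀ : 0 < p := by linarith
  have h_int := intervalIntegrable_one_sub_rpow_rpow_one_div_sub_one hp hu₀ hu₁
  have h_arc_int : IntervalIntegrable (lpArc p) volume u 1 :=
    (continuous_lpArc hp₀).intervalIntegrable u 1
  have h_ftc := intervalIntegral.integral_eq_sub_of_hasDerivAt_of_le hu₁
    (f := fun x => x * lpArc p x) (f' := fun x => 2 * lpArc p x - (1 - x ^ p) ^ (1 / p - 1))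
    (continuous_id.mul (continuous_lpArc hp₀)).continuousOn (fun x hx => by
      have hx₀ : 0 < x := hu₀.trans_lt hx.1
      have hA : 1 - x ^ p ≠ 0 := (sub_pos.2 (rpow_lt_one hx₀.le hx.2 hp₀)).ne'
      refine ((hasDerivAt_id' x).mul (hasDerivAt_lpArc hp₀ hx₀ hx.2)).congr_deriv ?_
      rw [rpow_sub_one hA, ← lpArc]
      field_simp
      ring)
    ((h_arc_int.const_mul 2).sub h_int)
  rw [intervalIntegral.integral_sub (h_arc_int.const_mul 2) h_int,
    intervalIntegral.integral_const_mul, lpArc_one hp₀] at h_ftc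
  linarith

lemma intervalIntegrable_rpow_mul_one_sub_rpow {a b : ℝ} (ha : 0 < a) (hb : 0 < b) :
    IntervalIntegrable (fun t => t ^ (a - 1) * (1 - t) ^ (b - 1)) volume 0 1 := by
  have h_left : IntervalIntegrable (fun t => t ^ (a - 1) * (1 - t) ^ (b - 1)) volume 0 (1 / 2) := by
    rw [intervalIntegrable_iff_integrableOn_Icc_of_le (by norm_num)]
    refine IntegrableOn.mul_continuousOn ?_ ?_ isCompact_Icc
    · exact (intervalIntegrable_iff_integrableOn_Icc_of_le (by norm_num)).1
        (intervalIntegral.intervalIntegrable_rpow' (by linarith))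
    · exact (continuousOn_const.sub continuousOn_id).rpow_const fun t ht =>
        Or.inl (sub_pos.2 (by linarith [ht.2] : t < 1)).ne'
  have h_right :
      IntervalIntegrable (fun t => t ^ (a - 1) * (1 - t) ^ (b - 1)) volume (1 / 2) 1 := by
    rw [intervalIntegrable_iff_integrableOn_Icc_of_le (by norm_num)]
    refine IntegrableOn.continuousOn_mul ?_ ?_ isCompact_Icc
    · exact continuousOn_id.rpow_const fun t ht => Or.inl (by linarith [ht.1] : (0 : ℝ) < t).ne'
    · refine (intervalIntegrable_iff_integrableOn_Icc_of_le (by norm_num)).1 ?_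
      have h := (intervalIntegral.intervalIntegrable_rpow' (by linarith : -1 < b - 1)
        (a := 1 / 2) (b := 0)).comp_sub_left 1
      norm_num at h ⊢
      exact h
  exact h_left.trans h_right

lemma sq_rpow_one_half_sub_one {a : ℝ} (ha : 0 < a) : (a ^ 2) ^ ((1 : ℝ) / 2 - 1) = a⁻¹ := by
  rw [← rpow_natCast, ← rpow_mul ha.le]
  norm_num [rpow_neg_one]

/-- The substitution `t = 4 x^p (1 - x^p)` turns the beta integrand into `(1 - x^p)^(1/p - 1)`. -/
lemma beta_integrand_comp_mul_deriv_eq {p x : ℝ} (hp : 0 < p) (hx₀ : 0 < x) (hx : 1 / 2 < x ^ p)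
    (hx₁ : x ^ p < 1) :
    4 * p * x ^ (p - 1) * (1 - 2 * x ^ p) * ((4 * x ^ p * (1 - x ^ p)) ^ (1 / p - 1)
      * (1 - 4 * x ^ p * (1 - x ^ p)) ^ ((1 : ℝ) / 2 - 1))
      = -(p * 4 ^ (1 / p)) * (1 - x ^ p) ^ (1 / p - 1) := by
  have hs₀ : 0 < x ^ p := rpow_pos_of_pos hx₀ p
  have hs₁ : 0 < 1 - x ^ p := by linarith
  have h_sq : 1 - 4 * x ^ p * (1 - x ^ p) = (2 * x ^ p - 1) ^ 2 := by ring
  have h_pow : (x ^ p) ^ (1 / p - 1) = x / x ^ p := by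
    rw [← rpow_mul hx₀.le, mul_sub, mul_one_div_cancel hp.ne', mul_one, rpow_sub hx₀, rpow_one]
  rw [h_sq, sq_rpow_one_half_sub_one (by linarith), mul_rpow (by positivity) hs₁.le,
    mul_rpow (by norm_num) hs₀.le, h_pow, rpow_sub_one (by norm_num : (4 : ℝ) ≠ 0),
    rpow_sub_one hx₀.ne']
  rw [show 1 - 2 * x ^ p = -(2 * x ^ p - 1) by ring]
  have hd : 2 * x ^ p - 1 ≠ 0 := by linarith
  generalize 2 * x ^ p - 1 = d at hd ⊢
  field_simp

lemma four_mul_mul_one_sub_mem_Icc {s : ℝ} (hs : s ∈ Icc (0 : ℝ) 1) :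
    4 * s * (1 - s) ∈ Icc (0 : ℝ) 1 :=
  ⟨by have := hs.1; have : 0 ≤ 1 - s := sub_nonneg.2 hs.2; positivity,
    by nlinarith [sq_nonneg (2 * s - 1)]⟩

lemma four_mul_mul_one_sub_mem_Ioo {s : ℝ} (hs : s ∈ Ioo (1 / 2 : ℝ) 1) :
    4 * s * (1 - s) ∈ Ioo (0 : ℝ) 1 :=
  ⟨by have : 0 < s := by linarith [hs.1]
      have : 0 < 1 - s := sub_pos.2 hs.2
      positivity,
    by nlinarith [hs.1, hs.2]⟩

lemma hasDerivAt_four_mul_rpow_mul_one_sub_rpow {p x : ℝ} (hx : 0 < x) :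
    HasDerivAt (fun x => 4 * x ^ p * (1 - x ^ p)) (4 * p * x ^ (p - 1) * (1 - 2 * x ^ p)) x := by
  have d := hasDerivAt_rpow_const (p := p) (Or.inl hx.ne')
  exact ((d.const_mul 4).mul (d.const_sub 1)).congr_deriv (by ring)

lemma integral_beta_integrand_eq_integral_one_sub_rpow {p u : ℝ} (hp : 1 ≤ p) (hu₀ : 0 < u)
    (hu₁ : u ≤ 1) (hu : 1 / 2 ≤ u ^ p) :
    ∫ t in (0 : ℝ)..4 * u ^ p * (1 - u ^ p), t ^ (1 / p - 1) * (1 - t) ^ ((1 : ℝ) / 2 - 1)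
      = p * 4 ^ (1 / p) * ∫ x in u..1, (1 - x ^ p) ^ (1 / p - 1) := by
  have hp₀ : 0 < p := by linarith
  set g : ℝ → ℝ := fun t => t ^ (1 / p - 1) * (1 - t) ^ ((1 : ℝ) / 2 - 1)
  set h : ℝ → ℝ := fun x => 4 * x ^ p * (1 - x ^ p)
  set h' : ℝ → ℝ := fun x => 4 * p * x ^ (p - 1) * (1 - 2 * x ^ p)
  have h_cont : Continuous h := by fun_prop (disch := linarith)
  have h_mem_Ioo : ∀ x ∈ Ioo u 1, x ^ p ∈ Ioo (1 / 2 : ℝ) 1 := fun x hx =>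
    ⟨hu.trans_lt (rpow_lt_rpow hu₀.le hx.1 hp₀), rpow_lt_one (hu₀.trans hx.1).le hx.2 hp₀⟩
  have h_maps_Ioo : MapsTo h (Ioo u 1) (Ioo 0 1) := fun x hx =>
    four_mul_mul_one_sub_mem_Ioo (h_mem_Ioo x hx)
  have h_maps_Icc : MapsTo h (Icc u 1) (Icc 0 1) := fun x hx =>
    four_mul_mul_one_sub_mem_Icc ⟨rpow_nonneg (hu₀.le.trans hx.1) p,
      rpow_le_one (hu₀.le.trans hx.1) hx.2 hp₀.le⟩
  have h_integrand : ∀ x ∈ Ioo u 1,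
      h' x • (g ∘ h) x = -(p * 4 ^ (1 / p)) * (1 - x ^ p) ^ (1 / p - 1) := fun x hx =>
    beta_integrand_comp_mul_deriv_eq hp₀ (hu₀.trans hx.1) (h_mem_Ioo x hx).1 (h_mem_Ioo x hx).2
  have h_g_cont : ContinuousOn g (Ioo 0 1) :=
    (continuousOn_id.rpow_const fun t ht => Or.inl ht.1.ne').mul
      ((continuousOn_const.sub continuousOn_id).rpow_const fun t ht => Or.inl (sub_pos.2 ht.2).ne')
  have h_g_int : IntegrableOn g (Icc 0 1) :=
    (intervalIntegrable_iff_integrableOn_Icc_of_le zero_le_one).1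
      (intervalIntegrable_rpow_mul_one_sub_rpow (one_div_pos.2 hp₀) one_half_pos)
  have h_int := intervalIntegrable_one_sub_rpow_rpow_one_div_sub_one hp hu₀.le hu₁
  have h_subst := intervalIntegral.integral_deriv_smul_comp''' (f := h) (f' := h') (g := g)
    h_cont.continuousOn
    (fun x hx => by
      rw [min_eq_left hu₁, max_eq_right hu₁] at hx
      exact (hasDerivAt_four_mul_rpow_mul_one_sub_rpow (hu₀.trans hx.1)).hasDerivWithinAt)
    (by rw [min_eq_left hu₁, max_eq_right hu₁]; exact h_g_cont.mono h_maps_Ioo.image_subset)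
    (by rw [uIcc_of_le hu₁]; exact h_g_int.mono_set h_maps_Icc.image_subset)
    (by
      rw [uIcc_of_le hu₁, integrableOn_Icc_iff_integrableOn_Ioo]
      refine IntegrableOn.congr_fun ?_ (fun x hx => (h_integrand x hx).symm) measurableSet_Ioo
      exact ((intervalIntegrable_iff_integrableOn_Ioo_of_le hu₁).1 h_int).const_mul _)
  rw [intervalIntegral.integral_of_le hu₁, integral_Ioc_eq_integral_Ioo,
    setIntegral_congr_fun measurableSet_Ioo h_integrand, integral_const_mul,
    ← integral_Ioc_eq_integral_Ioo, ← intervalIntegral.integral_of_le hu₁] at h_subst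
  simp only [h, one_rpow, sub_self, mul_zero] at h_subst
  rw [intervalIntegral.integral_symm 0] at h_subst
  linarith

lemma two_mul_sectorArea_lpBall {p u : ℝ} (hp : 1 ≤ p) (hu₀ : 0 < u) (hu₁ : u ≤ 1) :
    2 * sectorArea (lpBall p) (polarAngle (u, lpArc p u))
      = ∫ x in u..1, (1 - x ^ p) ^ (1 / p - 1) := by
  rw [sectorArea_lpBall (by linarith) hu₀ hu₁,
    integral_one_sub_rpow_rpow_one_div_sub_one hp hu₀.le hu₁]
  ring

lemma abs_rpow_mul_sign_of_nonneg {a r : ℝ} (ha : 0 ≤ a) (hr : r ≠ 0) :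
    |a| ^ r * Real.sign a = a ^ r := by
  rcases ha.eq_or_lt with rfl | ha
  · simp [zero_rpow hr]
  · rw [abs_of_pos ha, Real.sign_of_pos ha, mul_one]

/-- For `φ ∈ [0, π/4]`, the generalized angle of the unit `Lᵖ`-ball is
`θ(φ) = (1/p) 4^{−1/p} B(sin² 2φ; 1/p, 1/2)` where `B(x; a, b) = ∫₀ˣ t^{a−1}(1−t)^{b−1} dt`
is the incomplete Euler beta function. -/
theorem stmt12 (p : ℝ) (hp : 1 < p) :
    ∀ φ ∈ Set.Icc (0 : ℝ) (Real.pi / 4),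
      θLp p φ = 1 / p * (4 : ℝ) ^ (-(1 / p)) *
        ∫ t in (0 : ℝ)..(Real.sin (2 * φ)) ^ 2,
          t ^ (1 / p - 1) * (1 - t) ^ ((1 : ℝ) / 2 - 1) := by
  rintro φ ⟨hφ₀, hφ₁⟩
  have hp₀ : 0 < p := by linarith
  have hc : 0 < cos φ := cos_pos_of_mem_Ioo ⟨by linarith [pi_pos], by linarith [pi_pos]⟩
  have hs : 0 ≤ sin φ := sin_nonneg_of_nonneg_of_le_pi hφ₀ (by linarith [pi_pos])
  set u := cos φ ^ (2 / p)
  have hu₀ : 0 < u := rpow_pos_of_pos hc _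
  have hu₁ : u ≤ 1 := rpow_le_one hc.le (cos_le_one φ) (by positivity)
  have hu_pow : u ^ p = cos φ ^ 2 := by
    rw [← rpow_mul hc.le, div_mul_cancel₀ _ hp₀.ne', rpow_two]
  have hu_half : 1 / 2 ≤ u ^ p := by
    rw [hu_pow, cos_sq]
    linarith [cos_nonneg_of_mem_Icc (x := 2 * φ) ⟨by linarith [pi_pos], by linarith⟩]
  have h_uLp : uLp p φ = u := abs_rpow_mul_sign_of_nonneg hc.le (by positivity)
  have h_vLp : vLp p φ = lpArc p u := by
    rw [vLp, abs_rpow_mul_sign_of_nonneg hs (by positivity), lpArc, hu_pow, ← sin_sq,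
      ← rpow_natCast, ← rpow_mul hs]
    norm_num [div_eq_mul_one_div 2 p]
  have h_sin_sq : sin (2 * φ) ^ 2 = 4 * u ^ p * (1 - u ^ p) := by
    rw [sin_two_mul, hu_pow, ← sin_sq]
    ring
  rw [θLp, h_uLp, h_vLp, two_mul_sectorArea_lpBall hp.le hu₀ hu₁, h_sin_sq,
    integral_beta_integrand_eq_integral_one_sub_rpow hp.le hu₀ hu₁ hu_half, rpow_neg (by norm_num)]
  field_simp
end

section
/- For 1 < p < ∞ and q defined by pq = p + q, let Ω be the unit Lp-ball in ℝ². Then the polar set Ω° is the unit Lq-ball, and the convex trigonometric functions satisfy cos_{Ω°}θ° = (cos φ)^{2/q} and sin_{Ω°}θ° = (sin φ)^{2/q} for φ ∈ [0, π/2], where θ ↔ θ° are corresponding angles and (cos_Ω θ, sin_Ω θ) = ((cos φ)^{2/p}, (sin φ)^{2/p}). In particular, the same parameter φ describes both corresponding boundary points. -/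
open MeasureTheory Real Set

/-! Everything comes from Young's inequality `a x ≤ |a|^q/q + |x|^p/p`. Summed over both
coordinates it is Hölder's inequality, giving `lpBall q ⊆ (lpBall p)°`, and the Hölder equality
vector gives the reverse inclusion. If `(a, b) ∈ lpBall q` supports `lpBall p` at `(x, y)`, the two
Young inequalities add up to at most `1` while their left sides add up to `1`; so both are
equalities, and Young's equality case gives `|a|^q = x^p`, `|b|^q = y^p`. For
`(x, y) = (cos^(2/p) φ, sin^(2/p) φ)` this reads `(a, b) = (cos^(2/q) φ, sin^(2/q) φ)`. -/

lemma Real.holderConjugate_of_mul_eq_add {p q : ℝ} (hp : 1 < p) (hpq : p * q = p + q) :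
    p.HolderConjugate q :=
  (holderConjugate_iff_eq_conjExponent hp).2 <| by
    rw [eq_div_iff (sub_ne_zero.2 hp.ne')]
    linarith

lemma abs_sign_mul_rpow_abs {r : ℝ} (hr : r ≠ 0) (x : ℝ) :
    |(SignType.sign x : ℝ) * |x| ^ r| = |x| ^ r := by
  rcases lt_trichotomy x 0 with h | rfl | h
  · simp [sign_neg h, rpow_nonneg]
  · simp [zero_rpow hr]
  · simp [sign_pos h, rpow_nonneg]

lemma mul_sign_mul_rpow_abs {r : ℝ} (hr : r + 1 ≠ 0) (x : ℝ) :
    x * ((SignType.sign x : ℝ) * |x| ^ r) = |x| ^ (r + 1) := by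
  rw [← mul_assoc, self_mul_sign, rpow_add_one' (abs_nonneg x) hr, mul_comm]

lemma mul_le_young {p q : ℝ} (hpq : p.HolderConjugate q) (a : ℝ) {x : ℝ} (hx : 0 ≤ x) :
    a * x ≤ |a| ^ q / q + x ^ p / p := by
  simpa [abs_of_nonneg hx] using young_inequality a x hpq.symm

lemma eq_rpow_of_mul_eq_young {p q a x : ℝ} (hpq : p.HolderConjugate q) (hx : 0 ≤ x)
    (h : a * x = |a| ^ q / q + x ^ p / p) : a = (x ^ p) ^ q⁻¹ := by
  -- otherwise `a x ≤ 0 < |a|^q/q`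
  have ha : 0 ≤ a := by
    by_contra! ha
    have : 0 < |a| ^ q / q := div_pos (rpow_pos_of_pos (abs_pos.2 ha.ne) q) hpq.symm.pos
    have : 0 ≤ x ^ p / p := div_nonneg (rpow_nonneg hx p) hpq.nonneg
    nlinarith
  rw [abs_of_nonneg ha] at h
  rw [← (young_inequality_eq_iff_of_nonneg ha hx hpq.symm).1 h,
    rpow_rpow_inv ha hpq.symm.ne_zero]

lemma young_add_young_le_one {p q : ℝ} (hpq : p.HolderConjugate q) {v w : ℝ × ℝ}
    (hv : v ∈ lpBall p) (hw : w ∈ lpBall q) :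
    (|w.1| ^ q / q + |v.1| ^ p / p) + (|w.2| ^ q / q + |v.2| ^ p / p) ≤ 1 :=
  calc (|w.1| ^ q / q + |v.1| ^ p / p) + (|w.2| ^ q / q + |v.2| ^ p / p)
      = (|w.1| ^ q + |w.2| ^ q) / q + (|v.1| ^ p + |v.2| ^ p) / p := by ring
    _ ≤ 1 / q + 1 / p := add_le_add (div_le_div_of_nonneg_right hw hpq.symm.nonneg)
        (div_le_div_of_nonneg_right hv hpq.nonneg)
    _ = 1 := by rw [one_div, one_div, hpq.symm.inv_add_inv_eq_one]

lemma dot_le_one_of_mem_lpBall {p q : ℝ} (hpq : p.HolderConjugate q) {v w : ℝ × ℝ}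
    (hv : v ∈ lpBall p) (hw : w ∈ lpBall q) : w.1 * v.1 + w.2 * v.2 ≤ 1 :=
  (add_le_add (young_inequality _ _ hpq.symm) (young_inequality _ _ hpq.symm)).trans
    (young_add_young_le_one hpq hv hw)

/-- The witness is the Hölder equality vector `(sgn a |a|^(q-1), sgn b |b|^(q-1))`, scaled into
`lpBall p`. -/
lemma exists_mem_lpBall_one_lt_dot {p q : ℝ} (hpq : p.HolderConjugate q) {w : ℝ × ℝ}
    (hw : w ∉ lpBall q) : ∃ v ∈ lpBall p, 1 < w.1 * v.1 + w.2 * v.2 := by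
  set S := |w.1| ^ q + |w.2| ^ q
  have hS : 1 < S := not_le.1 hw
  have hS0 : 0 < S := one_pos.trans hS
  set c := S ^ (-p⁻¹)
  have hc : 0 < c := rpow_pos_of_pos hS0 _
  set dual : ℝ → ℝ := fun x ↦ c * ((SignType.sign x : ℝ) * |x| ^ (q - 1))
  have abs_dual_rpow (x : ℝ) : |dual x| ^ p = S⁻¹ * |x| ^ q := by
    rw [abs_mul, abs_of_pos hc, abs_sign_mul_rpow_abs hpq.symm.sub_one_ne_zero,
      mul_rpow hc.le (rpow_nonneg (abs_nonneg x) _), ← rpow_mul hS0.le, ← rpow_mul (abs_nonneg x),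
      hpq.symm.sub_one_mul_conj, neg_mul, inv_mul_cancel₀ hpq.ne_zero, rpow_neg_one]
  have mul_dual (x : ℝ) : x * dual x = c * |x| ^ q := by
    rw [mul_left_comm, mul_sign_mul_rpow_abs (by linarith [hpq.symm.pos]), sub_add_cancel]
  refine ⟨(dual w.1, dual w.2), ?_, ?_⟩
  · show |dual w.1| ^ p + |dual w.2| ^ p ≤ 1
    rw [abs_dual_rpow, abs_dual_rpow, ← mul_add, inv_mul_cancel₀ hS0.ne']
  · have hexp : -p⁻¹ + 1 = q⁻¹ := by rw [neg_add_eq_sub, hpq.one_sub_inv]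
    rw [mul_dual, mul_dual, ← mul_add, ← rpow_add_one' hS0.le (hexp ▸ hpq.symm.inv_ne_zero), hexp]
    exact one_lt_rpow hS hpq.symm.inv_pos

lemma polarSet_lpBall {p q : ℝ} (hpq : p.HolderConjugate q) :
    polarSet (lpBall p) = lpBall q := by
  ext w
  refine ⟨fun hw ↦ ?_, fun hw v hv ↦ dot_le_one_of_mem_lpBall hpq hv hw⟩
  by_contra hw'
  obtain ⟨v, hv, hlt⟩ := exists_mem_lpBall_one_lt_dot hpq hw'
  exact (hw v hv).not_gt hlt

lemma eq_of_mem_lpBall_of_dot_eq_one {p q x y : ℝ} (hpq : p.HolderConjugate q) (hx : 0 ≤ x)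
    (hy : 0 ≤ y) (hxy : (x, y) ∈ lpBall p) {w : ℝ × ℝ} (hw : w ∈ lpBall q)
    (h : w.1 * x + w.2 * y = 1) : w = ((x ^ p) ^ q⁻¹, (y ^ p) ^ q⁻¹) := by
  have hsum := young_add_young_le_one hpq hxy hw
  simp only [abs_of_nonneg hx, abs_of_nonneg hy] at hsum
  have hx' := mul_le_young hpq w.1 hx
  have hy' := mul_le_young hpq w.2 hy
  exact Prod.ext (eq_rpow_of_mul_eq_young hpq hx (by linarith))
    (eq_rpow_of_mul_eq_young hpq hy (by linarith))

lemma rpow_two_div_rpow {c p : ℝ} (hc : 0 ≤ c) (hp : p ≠ 0) : (c ^ (2 / p)) ^ p = c ^ 2 := by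
  rw [← rpow_mul hc, div_mul_cancel₀ _ hp, rpow_two]

lemma sq_rpow_inv {c q : ℝ} (hc : 0 ≤ c) : (c ^ 2) ^ q⁻¹ = c ^ (2 / q) := by
  rw [← rpow_two, ← rpow_mul hc, div_eq_mul_inv]

lemma eq_rpow_two_div_of_supports_lpBall {p q c s : ℝ} (hpq : p.HolderConjugate q)
    (hc : 0 ≤ c) (hs : 0 ≤ s) (hcs : c ^ 2 + s ^ 2 = 1) {w : ℝ × ℝ}
    (hw : Supports (lpBall p) (c ^ (2 / p), s ^ (2 / p)) w) :
    w = (c ^ (2 / q), s ^ (2 / q)) := by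
  have hmem : (c ^ (2 / p), s ^ (2 / p)) ∈ lpBall p := by
    show |c ^ (2 / p)| ^ p + |s ^ (2 / p)| ^ p ≤ 1
    rw [abs_of_nonneg (rpow_nonneg hc _), abs_of_nonneg (rpow_nonneg hs _),
      rpow_two_div_rpow hc hpq.ne_zero, rpow_two_div_rpow hs hpq.ne_zero, hcs]
  have hw' : w ∈ lpBall q := polarSet_lpBall hpq ▸ hw.2
  rw [eq_of_mem_lpBall_of_dot_eq_one hpq (rpow_nonneg hc _) (rpow_nonneg hs _) hmem hw' hw.1,
    rpow_two_div_rpow hc hpq.ne_zero, rpow_two_div_rpow hs hpq.ne_zero, sq_rpow_inv hc,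
    sq_rpow_inv hs]

theorem stmt13_general (p q : ℝ) (hp : 1 < p) (hpq : p * q = p + q)
    (P Q : ℝ → ℝ × ℝ) :
    polarSet (lpBall p) = lpBall q ∧
    ∀ φ ∈ Set.Icc (0 : ℝ) (Real.pi / 2), ∀ θ θpol : ℝ,
      P θ = (Real.cos φ ^ (2 / p), Real.sin φ ^ (2 / p)) →
      Supports (lpBall p) (P θ) (Q θpol) →
      Q θpol = (Real.cos φ ^ (2 / q), Real.sin φ ^ (2 / q)) := by
  have hpq' := Real.holderConjugate_of_mul_eq_add hp hpq
  refine ⟨polarSet_lpBall hpq', fun φ hφ θ θpol hPθ hsupp ↦ ?_⟩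
  have hcos : 0 ≤ cos φ := cos_nonneg_of_mem_Icc ⟨by linarith [hφ.1, pi_pos], hφ.2⟩
  have hsin : 0 ≤ sin φ := sin_nonneg_of_nonneg_of_le_pi hφ.1 (by linarith [hφ.2, pi_pos])
  rw [hPθ] at hsupp
  exact eq_rpow_two_div_of_supports_lpBall hpq' hcos hsin (cos_sq_add_sin_sq φ) hsupp

/-- For `1 < p < ∞` with `pq = p + q`, the polar of the unit `Lᵖ`-ball is the unit
`L^q`-ball, and if `(cos_Ω θ, sin_Ω θ) = ((cos φ)^{2/p}, (sin φ)^{2/p})` for `φ ∈ [0, π/2]`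
and `θ°` corresponds to `θ`, then
`(cos_{Ω°} θ°, sin_{Ω°} θ°) = ((cos φ)^{2/q}, (sin φ)^{2/q})`. -/
theorem stmt13 (p q : ℝ) (hp : 1 < p) (hpq : p * q = p + q)
    (P Q : ℝ → ℝ × ℝ) (hP : IsCT (lpBall p) P) (hQ : IsCT (polarSet (lpBall p)) Q) :
    polarSet (lpBall p) = lpBall q ∧
    ∀ φ ∈ Set.Icc (0 : ℝ) (Real.pi / 2), ∀ θ θpol : ℝ,
      P θ = (Real.cos φ ^ (2 / p), Real.sin φ ^ (2 / p)) →
      Supports (lpBall p) (P θ) (Q θpol) →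
      Q θpol = (Real.cos φ ^ (2 / q), Real.sin φ ^ (2 / q)) :=
  stmt13_general p q hp hpq P Q
end

section
/- Let Ω = {(u,v) ∈ ℝ² : |u| + |v| ≤ 1}. Then cos_Ω and sin_Ω are periodic with period 4, cos_Ω θ = |θ − 2| − 1 for θ ∈ [0, 4], and sin_Ω θ = cos_Ω(θ − 1). -/
/-!
The diamond `Ω = {|u| + |v| ≤ 1}` is invariant under the quarter turn `(u, v) ↦ (-v, u)`, which
adds `π / 2` to polar angles. Hence its sector areas satisfy `A (β + π/2) = A (π/2) + A β`, and
four quarter turns give `A (π/2) = area Ω / 4 = 1 / 2`. Let `Q θ = (c θ, c (θ - 1))`, where `c`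
is the `4`-periodic extension of `|θ - 2| - 1`. Then `Q t = (1 - t, t)` on `[0, 1]`, where the
sector is a shear of the first-quadrant triangle with area `t / 2`, and `Q (θ + 1)` is the quarter
turn of `Q θ`. So the sector up to `Q t` has area `t / 2` for `t ∈ [0, 4)`. Every boundary point
is some `Q t`, so the sector-area condition forces `P = Q` on `[0, 4)`, and then everywhere by
periodicity.
-/

open MeasureTheory Real Set

def toComplex (v : ℝ × ℝ) : ℂ := (v.1 : ℂ) + (v.2 : ℂ) * Complex.I

@[simp] lemma toComplex_re (v : ℝ × ℝ) : (toComplex v).re = v.1 := by simp [toComplex]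

@[simp] lemma toComplex_im (v : ℝ × ℝ) : (toComplex v).im = v.2 := by simp [toComplex]

lemma toComplex_ne_zero {v : ℝ × ℝ} (hv : v ≠ 0) : toComplex v ≠ 0 :=
  fun h => hv (Prod.ext (by simpa using congrArg Complex.re h)
    (by simpa using congrArg Complex.im h))

lemma polarAngle_eq_ite (v : ℝ × ℝ) : polarAngle v =
    if 0 ≤ (toComplex v).arg then (toComplex v).arg else (toComplex v).arg + 2 * π := rfl

lemma polarAngle_mem_Ico (v : ℝ × ℝ) : polarAngle v ∈ Ico 0 (2 * π) := by
  have := Complex.neg_pi_lt_arg (toComplex v)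
  have := Complex.arg_le_pi (toComplex v)
  rw [polarAngle_eq_ite]
  split_ifs <;> constructor <;> linarith [pi_pos]

lemma coe_polarAngle (v : ℝ × ℝ) : (polarAngle v : Real.Angle) = Complex.arg (toComplex v) := by
  rw [polarAngle_eq_ite]
  split_ifs
  · rfl
  · rw [Real.Angle.coe_add, Real.Angle.coe_two_pi, add_zero]

lemma polarAngle_eq_of_coe_eq {v : ℝ × ℝ} {θ : ℝ} (hθ : θ ∈ Ico 0 (2 * π))
    (h : (θ : Real.Angle) = Complex.arg (toComplex v)) : polarAngle v = θ := by
  have hv := polarAngle_mem_Ico v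
  rw [← zero_add (2 * π)] at hv hθ
  have : Fact (0 < 2 * π) := ⟨two_pi_pos⟩
  exact (AddCircle.coe_eq_coe_iff_of_mem_Ico hv hθ).1 ((coe_polarAngle v).trans h.symm)

@[simp] lemma polarAngle_zero : polarAngle 0 = 0 := by simp [polarAngle]

lemma norm_mul_cos_polarAngle (v : ℝ × ℝ) : ‖toComplex v‖ * cos (polarAngle v) = v.1 := by
  rw [← Real.Angle.cos_coe, coe_polarAngle, Real.Angle.cos_coe, Complex.norm_mul_cos_arg,
    toComplex_re]

lemma norm_mul_sin_polarAngle (v : ℝ × ℝ) : ‖toComplex v‖ * sin (polarAngle v) = v.2 := by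
  rw [← Real.Angle.sin_coe, coe_polarAngle, Real.Angle.sin_coe, Complex.norm_mul_sin_arg,
    toComplex_im]

lemma sin_neg_of_pi_lt_of_lt_two_pi {φ : ℝ} (h1 : π < φ) (h2 : φ < 2 * π) : sin φ < 0 := by
  rw [← neg_neg (sin φ), ← sin_sub_pi]
  exact neg_lt_zero.2 (sin_pos_of_pos_of_lt_pi (by linarith) (by linarith))

lemma snd_eq_zero_of_polarAngle_eq_zero {v : ℝ × ℝ} (h : polarAngle v = 0) : v.2 = 0 := by
  rw [← norm_mul_sin_polarAngle, h, sin_zero, mul_zero]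

lemma snd_neg_of_pi_lt_polarAngle {v : ℝ × ℝ} (h : π < polarAngle v) : v.2 < 0 := by
  have hv : v ≠ 0 := by rintro rfl; simp at h; linarith [pi_pos]
  rw [← norm_mul_sin_polarAngle]
  exact mul_neg_of_pos_of_neg (norm_pos_iff.2 (toComplex_ne_zero hv))
    (sin_neg_of_pi_lt_of_lt_two_pi h (polarAngle_mem_Ico v).2)

lemma polarAngle_mem_Ioo_of_snd_pos {x : ℝ × ℝ} (hx : 0 < x.2) : polarAngle x ∈ Ioo 0 π := by
  refine ⟨(polarAngle_mem_Ico x).1.lt_of_ne fun h =>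
    hx.ne' (snd_eq_zero_of_polarAngle_eq_zero h.symm), not_le.1 fun h => ?_⟩
  rcases h.eq_or_lt with h | h
  · rw [← norm_mul_sin_polarAngle, ← h, sin_pi, mul_zero] at hx
    exact hx.false
  · exact (snd_neg_of_pi_lt_polarAngle h).not_gt hx

lemma polarAngle_le_iff_of_snd_pos {x : ℝ × ℝ} (hx : 0 < x.2) (v : ℝ × ℝ) :
    polarAngle v ≤ polarAngle x ↔ 0 ≤ v.2 ∧ x.1 * v.2 - x.2 * v.1 ≤ 0 := by
  rcases eq_or_ne v 0 with rfl | hv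
  · simpa using (polarAngle_mem_Ico x).1
  obtain ⟨hα0, hαπ⟩ := polarAngle_mem_Ioo_of_snd_pos hx
  have hφ0 := (polarAngle_mem_Ico v).1
  have hr : 0 < ‖toComplex x‖ := norm_pos_iff.2 (toComplex_ne_zero (by rintro rfl; simp at hx))
  have hρ : 0 < ‖toComplex v‖ := norm_pos_iff.2 (toComplex_ne_zero hv)
  have hcross : x.1 * v.2 - x.2 * v.1 =
      ‖toComplex x‖ * ‖toComplex v‖ * sin (polarAngle v - polarAngle x) := by
    rw [sin_sub, ← norm_mul_cos_polarAngle x, ← norm_mul_sin_polarAngle x,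
      ← norm_mul_cos_polarAngle v, ← norm_mul_sin_polarAngle v]
    ring
  constructor
  · intro h
    rw [hcross, ← norm_mul_sin_polarAngle v]
    exact ⟨mul_nonneg hρ.le (sin_nonneg_of_nonneg_of_le_pi hφ0 (by linarith)),
      mul_nonpos_of_nonneg_of_nonpos (by positivity)
        (sin_nonpos_of_nonpos_of_neg_pi_le (by linarith) (by linarith))⟩
  · rintro ⟨h2, hc⟩
    have hφπ : polarAngle v ≤ π := not_lt.1 fun h => (snd_neg_of_pi_lt_polarAngle h).not_ge h2
    by_contra! h
    rw [hcross] at hc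
    nlinarith [mul_pos (mul_pos hr hρ) (sin_pos_of_pos_of_lt_pi (sub_pos.2 h) (by linarith))]

lemma polarAngle_zero_one : polarAngle (0, 1) = π / 2 :=
  polarAngle_eq_of_coe_eq ⟨by positivity, by linarith [pi_pos]⟩ (by simp [toComplex])

lemma polarAngle_le_pi_div_two_iff (v : ℝ × ℝ) : polarAngle v ≤ π / 2 ↔ 0 ≤ v.1 ∧ 0 ≤ v.2 := by
  rw [← polarAngle_zero_one, polarAngle_le_iff_of_snd_pos one_pos]
  simp only [zero_mul, one_mul, zero_sub, neg_nonpos]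
  exact and_comm

lemma polarAngle_one_zero : polarAngle (1, 0) = 0 :=
  polarAngle_eq_of_coe_eq ⟨le_rfl, two_pi_pos⟩ (by simp [toComplex])

lemma polarAngle_lt_pi_div_two {v : ℝ × ℝ} (h1 : 0 < v.1) (h2 : 0 ≤ v.2) :
    polarAngle v < π / 2 := by
  refine ((polarAngle_le_pi_div_two_iff v).2 ⟨h1.le, h2⟩).lt_of_ne fun h => h1.ne' ?_
  rw [← norm_mul_cos_polarAngle, h, cos_pi_div_two, mul_zero]

lemma fst_eq_zero_of_polarAngle_eq {v : ℝ × ℝ} (h : polarAngle v = 3 * π / 2) : v.1 = 0 := by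
  rw [← norm_mul_cos_polarAngle, h, show 3 * π / 2 = π / 2 + π by ring, cos_add_pi, cos_pi_div_two,
    neg_zero, mul_zero]

noncomputable def planeMap (a b c d : ℝ) : ℝ × ℝ →ₗ[ℝ] ℝ × ℝ :=
  Matrix.toLin (Module.Basis.finTwoProd ℝ) (Module.Basis.finTwoProd ℝ) !![a, b; c, d]

@[simp] lemma planeMap_apply (a b c d : ℝ) (v : ℝ × ℝ) :
    planeMap a b c d v = (a * v.1 + b * v.2, c * v.1 + d * v.2) :=
  Matrix.toLin_finTwoProd_apply a b c d v

lemma volume_preimage_planeMap {a b c d : ℝ} (h : a * d - b * c ≠ 0) (s : Set (ℝ × ℝ)) :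
    volume (planeMap a b c d ⁻¹' s) = ENNReal.ofReal |(a * d - b * c)⁻¹| * volume s := by
  have hdet : LinearMap.det (planeMap a b c d) = a * d - b * c := by
    rw [planeMap, LinearMap.det_toLin, Matrix.det_fin_two_of]
  rw [Measure.addHaar_preimage_linearMap _ (hdet ▸ h), hdet]

noncomputable def quarterTurn : ℝ × ℝ →ₗ[ℝ] ℝ × ℝ := planeMap 0 (-1) 1 0

@[simp] lemma quarterTurn_apply (v : ℝ × ℝ) : quarterTurn v = (-v.2, v.1) := by
  simp [quarterTurn]

lemma volume_preimage_quarterTurn (s : Set (ℝ × ℝ)) : volume (quarterTurn ⁻¹' s) = volume s := by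
  rw [quarterTurn, volume_preimage_planeMap (by norm_num)]
  norm_num

lemma quarterTurn_ne_zero {v : ℝ × ℝ} (hv : v ≠ 0) : quarterTurn v ≠ 0 := by
  contrapose! hv
  simp only [quarterTurn_apply, Prod.mk_eq_zero, neg_eq_zero] at hv
  exact Prod.ext hv.2 hv.1

lemma coe_polarAngle_quarterTurn {x : ℝ × ℝ} (hx : x ≠ 0) :
    (Complex.arg (toComplex (quarterTurn x)) : Real.Angle) = (polarAngle x + π / 2 : ℝ) := by
  have : toComplex (quarterTurn x) = Complex.I * toComplex x := by
    apply Complex.ext <;> simp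
  rw [this, Complex.arg_mul_coe_angle Complex.I_ne_zero (toComplex_ne_zero hx), Complex.arg_I,
    ← coe_polarAngle, Real.Angle.coe_add, add_comm]

lemma polarAngle_quarterTurn_of_lt {x : ℝ × ℝ} (hx : x ≠ 0) (h : polarAngle x < 3 * π / 2) :
    polarAngle (quarterTurn x) = polarAngle x + π / 2 :=
  polarAngle_eq_of_coe_eq ⟨by linarith [(polarAngle_mem_Ico x).1, pi_pos], by linarith⟩
    (coe_polarAngle_quarterTurn hx).symm

lemma polarAngle_quarterTurn_of_ge {x : ℝ × ℝ} (hx : x ≠ 0) (h : 3 * π / 2 ≤ polarAngle x) :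
    polarAngle (quarterTurn x) = polarAngle x - 3 * π / 2 := by
  refine polarAngle_eq_of_coe_eq ⟨by linarith, by linarith [(polarAngle_mem_Ico x).2, pi_pos]⟩ ?_
  rw [coe_polarAngle_quarterTurn hx, show polarAngle x - 3 * π / 2 = polarAngle x + π / 2 - 2 * π
    by ring, Real.Angle.coe_sub, Real.Angle.coe_two_pi, sub_zero]

lemma iterate_quarterTurn_ne_zero {x : ℝ × ℝ} (hx : x ≠ 0) (k : ℕ) : quarterTurn^[k] x ≠ 0 := by
  induction k with
  | zero => exact hx
  | succ k ih => rw [Function.iterate_succ_apply']; exact quarterTurn_ne_zero ih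

lemma polarAngle_iterate_quarterTurn {x : ℝ × ℝ} (hx : x ≠ 0) (hxa : polarAngle x < π / 2)
    {k : ℕ} (hk : k ≤ 3) : polarAngle (quarterTurn^[k] x) = polarAngle x + k * (π / 2) := by
  induction k with
  | zero => simp
  | succ k ih =>
    have hk' : (k : ℝ) ≤ 2 := by exact_mod_cast Nat.le_of_lt_succ hk
    rw [Function.iterate_succ_apply',
      polarAngle_quarterTurn_of_lt (iterate_quarterTurn_ne_zero hx k)
        (by rw [ih (by omega)]; nlinarith [pi_pos]),
      ih (by omega)]
    push_cast
    ring

def sector (Ω : Set (ℝ × ℝ)) (β : ℝ) : Set (ℝ × ℝ) := {v | v ∈ Ω ∧ polarAngle v ≤ β}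

lemma sectorArea_eq (Ω : Set (ℝ × ℝ)) (β : ℝ) :
    sectorArea Ω β = (volume (sector Ω β)).toReal := rfl

lemma measurable_polarAngle : Measurable polarAngle := by
  have harg : Measurable fun v : ℝ × ℝ => Complex.arg (toComplex v) :=
    Complex.measurable_arg.comp (by unfold toComplex; fun_prop)
  simp_rw [funext polarAngle_eq_ite]
  exact Measurable.ite (measurableSet_le measurable_const harg) harg (harg.add_const _)

lemma measurableSet_sector {Ω : Set (ℝ × ℝ)} (hΩ : MeasurableSet Ω) (β : ℝ) :
    MeasurableSet (sector Ω β) :=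
  hΩ.inter (measurableSet_le measurable_polarAngle measurable_const)

lemma volume_setOf_fst_eq_zero : volume {v : ℝ × ℝ | v.1 = 0} = 0 := by
  rw [show {v : ℝ × ℝ | v.1 = 0} = {0} ×ˢ univ by ext; simp, Measure.volume_eq_prod,
    Measure.prod_prod, Real.volume_singleton, zero_mul]

lemma volume_setOf_snd_eq_zero : volume {v : ℝ × ℝ | v.2 = 0} = 0 := by
  rw [show {v : ℝ × ℝ | v.2 = 0} = univ ×ˢ {0} by ext; simp, Measure.volume_eq_prod,
    Measure.prod_prod, Real.volume_singleton, mul_zero]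

lemma sectorArea_zero (Ω : Set (ℝ × ℝ)) : sectorArea Ω 0 = 0 := by
  rw [sectorArea, measure_mono_null _ volume_setOf_snd_eq_zero, ENNReal.toReal_zero]
  exact fun v hv => snd_eq_zero_of_polarAngle_eq_zero (hv.2.antisymm (polarAngle_mem_Ico v).1)

lemma sectorArea_two_pi (Ω : Set (ℝ × ℝ)) : sectorArea Ω (2 * π) = area2 Ω := by
  rw [sectorArea, area2]
  congr 2
  exact sep_eq_self_iff_mem_true.2 fun v _ => (polarAngle_mem_Ico v).2.le

lemma polarAngle_quarterTurn_le_iff {β : ℝ} (hβ : 0 ≤ β) (x : ℝ × ℝ) :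
    polarAngle (quarterTurn x) ≤ β + π / 2 ↔
      polarAngle (quarterTurn x) ≤ π / 2 ∨ polarAngle x ≤ β := by
  have := polarAngle_mem_Ico x
  rcases eq_or_ne x 0 with rfl | hx
  · simp only [map_zero, polarAngle_zero]
    exact iff_of_true (by positivity) (Or.inl (by positivity))
  rcases lt_or_ge (polarAngle x) (3 * π / 2) with h | h
  · rw [polarAngle_quarterTurn_of_lt hx h]
    constructor
    · exact fun h' => Or.inr (by linarith)
    · rintro (h' | h') <;> linarith [this.1]
  · rw [polarAngle_quarterTurn_of_ge hx h]
    exact iff_of_true (by linarith [this.2]) (Or.inl (by linarith [this.2]))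

lemma fst_eq_zero_or_snd_eq_zero_of_polarAngle_quarterTurn_le {x : ℝ × ℝ}
    (h1 : polarAngle (quarterTurn x) ≤ π / 2) (h2 : polarAngle x ≤ 3 * π / 2) :
    x.1 = 0 ∨ x.2 = 0 := by
  rcases eq_or_ne x 0 with rfl | hx
  · exact Or.inl rfl
  rcases h2.lt_or_eq with h | h
  · rw [polarAngle_quarterTurn_of_lt hx h] at h1
    exact Or.inr (snd_eq_zero_of_polarAngle_eq_zero
      (le_antisymm (by linarith) (polarAngle_mem_Ico x).1))
  · exact Or.inl (fst_eq_zero_of_polarAngle_eq h)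

section QuarterTurnInvariant

variable {Ω : Set (ℝ × ℝ)} (hΩ : MeasurableSet Ω) (hfin : volume Ω ≠ ⊤)
  (hrot : quarterTurn ⁻¹' Ω = Ω)
include hrot

lemma preimage_quarterTurn_sector {β : ℝ} (hβ : 0 ≤ β) :
    quarterTurn ⁻¹' sector Ω (β + π / 2) = quarterTurn ⁻¹' sector Ω (π / 2) ∪ sector Ω β := by
  ext x
  have hx : quarterTurn x ∈ Ω ↔ x ∈ Ω := by rw [← mem_preimage, hrot]
  simp only [sector, mem_preimage, mem_union, mem_ofPred_eq, hx, polarAngle_quarterTurn_le_iff hβ]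
  tauto

include hΩ hfin

/-- The quarter turn carries the sector up to `β` onto the part of the sector up to `β + π / 2`
lying beyond angle `π / 2`; the two pieces meet only on the coordinate axes. -/
lemma sectorArea_add_pi_div_two {β : ℝ} (hβ0 : 0 ≤ β) (hβ : β ≤ 3 * π / 2) :
    sectorArea Ω (β + π / 2) = sectorArea Ω (π / 2) + sectorArea Ω β := by
  have hdisj : AEDisjoint volume (quarterTurn ⁻¹' sector Ω (π / 2)) (sector Ω β) :=
    measure_mono_null
      (fun x hx => fst_eq_zero_or_snd_eq_zero_of_polarAngle_quarterTurn_le hx.1.2 (hx.2.2.trans hβ))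
      (measure_union_null volume_setOf_fst_eq_zero volume_setOf_snd_eq_zero)
  have hfin' (γ : ℝ) : volume (sector Ω γ) ≠ ⊤ := measure_ne_top_of_subset (fun _ h => h.1) hfin
  rw [sectorArea_eq, sectorArea_eq, sectorArea_eq, ← volume_preimage_quarterTurn,
    preimage_quarterTurn_sector hrot hβ0,
    measure_union₀ (measurableSet_sector hΩ β).nullMeasurableSet hdisj,
    volume_preimage_quarterTurn, ENNReal.toReal_add (hfin' _) (hfin' _)]

lemma sectorArea_add_nat_mul_pi_div_two {β : ℝ} (hβ : 0 ≤ β) (k : ℕ)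
    (hk : β + k * (π / 2) ≤ 2 * π) :
    sectorArea Ω (β + k * (π / 2)) = k * sectorArea Ω (π / 2) + sectorArea Ω β := by
  induction k with
  | zero => simp
  | succ k ih =>
    push_cast at hk ⊢
    rw [show β + (k + 1) * (π / 2) = β + k * (π / 2) + π / 2 by ring,
      sectorArea_add_pi_div_two hΩ hfin hrot (by positivity) (by linarith),
      ih (by linarith [pi_pos])]
    ring

lemma sectorArea_pi_div_two : sectorArea Ω (π / 2) = area2 Ω / 4 := by
  have h := sectorArea_add_nat_mul_pi_div_two hΩ hfin hrot le_rfl 4 (by linarith)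
  rw [show (0 : ℝ) + (4 : ℕ) * (π / 2) = 2 * π by push_cast; ring, sectorArea_two_pi,
    sectorArea_zero] at h
  linarith

end QuarterTurnInvariant

def diamond : Set (ℝ × ℝ) := {v | |v.1| + |v.2| ≤ 1}

lemma measurableSet_diamond : MeasurableSet diamond :=
  measurableSet_le (by fun_prop) measurable_const

lemma preimage_quarterTurn_diamond : quarterTurn ⁻¹' diamond = diamond := by
  ext v
  simp [diamond, add_comm]

lemma frontier_diamond_subset : frontier diamond ⊆ {v | |v.1| + |v.2| = 1} :=
  frontier_le_subset_eq (by fun_prop) continuous_const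

lemma abs_add_abs_le_iff {a b c : ℝ} : |a| + |b| ≤ c ↔ |a + b| ≤ c ∧ |a - b| ≤ c := by
  grind [abs_le]

lemma volume_diamond : volume diamond = ENNReal.ofReal 2 := by
  have hsq : diamond = planeMap 1 1 1 (-1) ⁻¹' (Icc (-1) 1 ×ˢ Icc (-1) 1) := by
    ext v
    simp only [diamond, mem_ofPred_eq, mem_preimage, planeMap_apply, mem_prod, mem_Icc,
      abs_add_abs_le_iff, abs_le, one_mul, neg_one_mul, sub_eq_add_neg]
  rw [hsq, volume_preimage_planeMap (by norm_num), Measure.volume_eq_prod, Measure.prod_prod,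
    Real.volume_Icc, ← ENNReal.ofReal_mul (by norm_num), ← ENNReal.ofReal_mul (by norm_num)]
  norm_num

lemma area2_diamond : area2 diamond = 2 := by
  rw [area2, volume_diamond, ENNReal.toReal_ofReal zero_le_two]

lemma sectorArea_diamond_pi_div_two : sectorArea diamond (π / 2) = 1 / 2 := by
  rw [sectorArea_pi_div_two measurableSet_diamond (by simp [volume_diamond])
    preimage_quarterTurn_diamond, area2_diamond]
  norm_num

/-- The shear fixing `(1, 0)` and sending `(1 - s, s)` to `(0, 1)` carries this sector onto the
first-quadrant sector. -/
lemma sector_diamond_eq_preimage {s : ℝ} (hs : 0 < s) (hs1 : s ≤ 1) :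
    sector diamond (polarAngle (1 - s, s)) =
      planeMap 1 ((s - 1) / s) 0 s⁻¹ ⁻¹' sector diamond (π / 2) := by
  ext v
  simp only [sector, diamond, mem_ofPred_eq, mem_preimage, planeMap_apply,
    polarAngle_le_iff_of_snd_pos (x := (1 - s, s)) hs, polarAngle_le_pi_div_two_iff, one_mul,
    zero_mul, zero_add]
  set a := v.1 + (s - 1) / s * v.2
  set b := s⁻¹ * v.2
  have hv1 : v.1 = a + (1 - s) * b := by simp only [a, b]; field_simp; ring
  have hv2 : v.2 = s * b := by simp only [b]; field_simp
  rw [hv1, hv2]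
  constructor
  · rintro ⟨hd, hb, ha⟩
    have hb' : 0 ≤ b := nonneg_of_mul_nonneg_right hb hs
    have ha' : 0 ≤ a := by nlinarith
    rw [abs_of_nonneg (by nlinarith), abs_of_nonneg (by positivity)] at hd
    rw [abs_of_nonneg ha', abs_of_nonneg hb']
    exact ⟨by nlinarith, ha', hb'⟩
  · rintro ⟨hd, ha, hb⟩
    rw [abs_of_nonneg ha, abs_of_nonneg hb] at hd
    rw [abs_of_nonneg (by nlinarith), abs_of_nonneg (by positivity)]
    exact ⟨by nlinarith, by positivity, by nlinarith⟩

lemma sectorArea_diamond_polarAngle_one_sub {s : ℝ} (hs0 : 0 ≤ s) (hs1 : s ≤ 1) :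
    sectorArea diamond (polarAngle (1 - s, s)) = s / 2 := by
  rcases hs0.eq_or_lt with rfl | hs
  · simp [polarAngle_one_zero, sectorArea_zero]
  have hdet : 1 * s⁻¹ - (s - 1) / s * 0 ≠ 0 := by simp [hs.ne']
  rw [sectorArea_eq, sector_diamond_eq_preimage hs hs1, volume_preimage_planeMap hdet,
    ENNReal.toReal_mul, ← sectorArea_eq, sectorArea_diamond_pi_div_two,
    ENNReal.toReal_ofReal (abs_nonneg _)]
  simp [abs_of_pos hs, div_eq_mul_one_div s]

theorem Function.Periodic.eq_of_eqOn_Ico {α β : Type*} [AddCommGroup α] [LinearOrder α]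
    [IsOrderedAddMonoid α] [Archimedean α] {f g : α → β} {c : α} (hf : Function.Periodic f c)
    (hg : Function.Periodic g c) (hc : 0 < c) (h : EqOn f g (Ico 0 c)) : f = g := funext fun x => by
  rw [← hf.sub_zsmul_eq (toIcoDiv hc 0 x), ← hg.sub_zsmul_eq (toIcoDiv hc 0 x),
    self_sub_toIcoDiv_zsmul]
  exact h (toIcoMod_mem_Ico' hc x)

/-- `cos_Ω` of the diamond. -/
noncomputable def diamondCos (θ : ℝ) : ℝ := |toIcoMod four_pos 0 θ - 2| - 1

noncomputable def diamondPoint (θ : ℝ) : ℝ × ℝ := (diamondCos θ, diamondCos (θ - 1))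

lemma diamondCos_periodic : Function.Periodic diamondCos 4 := fun θ => by
  simp only [diamondCos, toIcoMod_add_right]

lemma diamondCos_of_mem_Ico {θ : ℝ} (h : θ ∈ Ico 0 4) : diamondCos θ = |θ - 2| - 1 := by
  rw [diamondCos, (toIcoMod_eq_self _).2 (by rwa [zero_add])]

lemma diamondCos_of_mem_Icc {θ : ℝ} (h : θ ∈ Icc 0 4) : diamondCos θ = |θ - 2| - 1 := by
  rcases h.2.lt_or_eq with h4 | rfl
  · exact diamondCos_of_mem_Ico ⟨h.1, h4⟩
  · rw [← zero_add 4, diamondCos_periodic, diamondCos_of_mem_Ico ⟨le_rfl, four_pos⟩]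
    norm_num

lemma diamondCos_add_two (θ : ℝ) : diamondCos (θ + 2) = -diamondCos θ := by
  have key : ∀ m ∈ Ico (0 : ℝ) 4, diamondCos (m + 2) = -diamondCos m := by
    rintro m ⟨h0, h4⟩
    rw [diamondCos_of_mem_Ico ⟨h0, h4⟩]
    rcases lt_or_ge m 2 with h | h
    · rw [diamondCos_of_mem_Ico ⟨by linarith, by linarith⟩, add_sub_cancel_right,
        abs_of_nonneg h0, abs_of_neg (by linarith)]
      ring
    · rw [← diamondCos_periodic.sub_eq, diamondCos_of_mem_Ico ⟨by linarith, by linarith⟩,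
        abs_of_nonpos (by linarith), abs_of_nonneg (by linarith)]
      ring
  have h := key _ (toIcoMod_mem_Ico' four_pos θ)
  rwa [← self_sub_toIcoDiv_zsmul, sub_add_eq_add_sub, diamondCos_periodic.sub_zsmul_eq,
    diamondCos_periodic.sub_zsmul_eq] at h

lemma diamondPoint_periodic : Function.Periodic diamondPoint 4 := fun θ => by
  rw [diamondPoint, diamondPoint, diamondCos_periodic, sub_eq_add_neg, add_right_comm,
    diamondCos_periodic, ← sub_eq_add_neg]

lemma diamondPoint_add_one (θ : ℝ) : diamondPoint (θ + 1) = quarterTurn (diamondPoint θ) := by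
  rw [diamondPoint, diamondPoint, quarterTurn_apply, add_sub_cancel_right,
    show θ + 1 = θ - 1 + 2 by ring, diamondCos_add_two]

lemma diamondPoint_add_nat (θ : ℝ) (k : ℕ) :
    diamondPoint (θ + k) = quarterTurn^[k] (diamondPoint θ) := by
  induction k with
  | zero => simp
  | succ k ih =>
    rw [Nat.cast_succ, ← add_assoc, diamondPoint_add_one, ih, Function.iterate_succ_apply']

lemma diamondPoint_of_mem_Icc {s : ℝ} (hs : s ∈ Icc 0 1) : diamondPoint s = (1 - s, s) := by
  have h1 : diamondCos (s + 1) = -s := by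
    rw [diamondCos_of_mem_Ico ⟨by linarith [hs.1], by linarith [hs.2]⟩,
      abs_of_nonpos (by linarith [hs.2])]
    ring
  rw [diamondPoint, diamondCos_of_mem_Ico ⟨hs.1, by linarith [hs.2]⟩,
    abs_of_nonpos (by linarith [hs.2]), ← neg_neg (diamondCos (s - 1)), ← diamondCos_add_two,
    show s - 1 + 2 = s + 1 by ring, h1]
  exact Prod.ext (by ring) (neg_neg s)

lemma exists_diamondPoint_eq {x : ℝ × ℝ} (hx : |x.1| + |x.2| = 1) :
    ∃ t ∈ Ico 0 4, diamondPoint t = x := by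
  have key : ∀ s ∈ Ico (0 : ℝ) 1, ∀ k : ℕ, k ≤ 3 → quarterTurn^[k] (1 - s, s) = x →
      ∃ t ∈ Ico 0 4, diamondPoint t = x := by
    rintro s ⟨hs0, hs1⟩ k hk h
    have hk' : (k : ℝ) ≤ 3 := by exact_mod_cast hk
    exact ⟨s + k, ⟨by positivity, by linarith⟩,
      by rw [diamondPoint_add_nat, diamondPoint_of_mem_Icc ⟨hs0, hs1.le⟩, h]⟩
  obtain h | h | h | h : (0 < x.1 ∧ 0 ≤ x.2) ∨ (x.1 ≤ 0 ∧ 0 < x.2) ∨ (x.1 < 0 ∧ x.2 ≤ 0) ∨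
      (0 ≤ x.1 ∧ x.2 < 0) := by
    grind
  · rw [abs_of_pos h.1, abs_of_nonneg h.2] at hx
    exact key x.2 ⟨h.2, by linarith⟩ 0 (by norm_num) (by ext <;> simp; linarith)
  · rw [abs_of_nonpos h.1, abs_of_pos h.2] at hx
    exact key (-x.1) ⟨by linarith, by linarith⟩ 1 (by norm_num) (by ext <;> simp; linarith)
  · rw [abs_of_neg h.1, abs_of_nonpos h.2] at hx
    exact key (-x.2) ⟨by linarith, by linarith⟩ 2 (by norm_num) (by ext <;> simp; linarith)
  · rw [abs_of_nonneg h.1, abs_of_neg h.2] at hx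
    exact key x.1 ⟨h.1, by linarith⟩ 3 (by norm_num) (by ext <;> simp; linarith)

lemma sectorArea_diamondPoint {t : ℝ} (ht : t ∈ Ico 0 4) :
    sectorArea diamond (polarAngle (diamondPoint t)) = t / 2 := by
  set k := ⌊t⌋₊
  set s := t - k
  have hk : k ≤ 3 := Nat.le_of_lt_succ ((Nat.floor_lt ht.1).2 (by norm_num; exact ht.2))
  have hs0 : 0 ≤ s := sub_nonneg.2 (Nat.floor_le ht.1)
  have hs1 : s < 1 := by simp only [s]; linarith [Nat.lt_floor_add_one t]
  have hx0 : ((1 - s, s) : ℝ × ℝ) ≠ 0 := fun h => by simp at h; linarith [h.1, h.2]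
  have hxa : polarAngle (1 - s, s) < π / 2 := polarAngle_lt_pi_div_two (by simpa) hs0
  have hkπ : polarAngle (1 - s, s) + k * (π / 2) ≤ 2 * π := by
    have : (k : ℝ) ≤ 3 := by exact_mod_cast hk
    nlinarith [pi_pos]
  rw [show t = s + k by ring, diamondPoint_add_nat, diamondPoint_of_mem_Icc ⟨hs0, hs1.le⟩,
    polarAngle_iterate_quarterTurn hx0 hxa hk,
    sectorArea_add_nat_mul_pi_div_two measurableSet_diamond (by simp [volume_diamond])
      preimage_quarterTurn_diamond (polarAngle_mem_Ico _).1 k hkπ,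
    sectorArea_diamond_pi_div_two, sectorArea_diamond_polarAngle_one_sub hs0 hs1.le]
  ring

/-- For `Ω = {|u| + |v| ≤ 1}`: `cos_Ω`, `sin_Ω` are `4`-periodic,
`cos_Ω θ = |θ − 2| − 1` on `[0, 4]`, and `sin_Ω θ = cos_Ω (θ − 1)`. -/
theorem stmt15 (P : ℝ → ℝ × ℝ)
    (hP : IsCT {v : ℝ × ℝ | |v.1| + |v.2| ≤ 1} P) :
    (∀ θ : ℝ, P (θ + 4) = P θ) ∧
    (∀ θ ∈ Set.Icc (0 : ℝ) 4, (P θ).1 = |θ - 2| - 1) ∧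
    (∀ θ : ℝ, (P θ).2 = (P (θ - 1)).1) := by
  obtain ⟨hper, hsec⟩ : IsCT diamond P := hP
  rw [area2_diamond, show (2 : ℝ) * 2 = 4 by norm_num] at hper hsec
  have hPQ : EqOn P diamondPoint (Ico 0 4) := fun θ hθ => by
    obtain ⟨hfr, harea⟩ := hsec θ hθ
    obtain ⟨t, ht, hPt⟩ := exists_diamondPoint_eq (frontier_diamond_subset hfr)
    rw [← hPt, sectorArea_diamondPoint ht] at harea
    rw [← hPt, show θ = t by linarith]
  obtain rfl : P = diamondPoint :=
    Function.Periodic.eq_of_eqOn_Ico hper diamondPoint_periodic four_pos hPQ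
  exact ⟨diamondPoint_periodic, fun θ hθ => diamondCos_of_mem_Icc hθ, fun θ => rfl⟩
end
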